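/- arXiv:2006.15180 — 9 statements merged into one kernel-verified Lean document; each statement's English description precedes it below -/
import Mathlib

section
/- Let N, M ≥ 1, let σ_1, …, σ_M > 0, and let X_1, …, X_M be random N×N complex matrices on a probability space whose entries x^{(k)}_{i,j} (over all indices k, i, j) form a jointly independent family of complex random variables with E[x^{(k)}_{i,j}] = 0 and E[|x^{(k)}_{i,j}|^2] = σ_k^2. Then for every z ∈ ℂ the random variable det(z·I_N − X_1⋯X_M) is integrable and E[det(z·I_N − X_1⋯X_M)] = z^N. -/
/-!
Changing one entry of `X_k` changes `X_1 ⋯ X_M` by a rank-one matrix `t • P Eᵢⱼ Q`, and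
`det (A + t • u wᵀ)` is affine in `t`: it is the determinant of the bordered matrix
`[[A, -t • u], [wᵀ, 1]]` (Schur complement), whose last column is affine in `t`. Hence
`det (C - X_1 ⋯ X_M)` is affine in each entry separately. For such a function `f` of independent
centred variables, write `f(x) = f(x|ₓₚ₌₀) + xₚ · (f(x|ₓₚ₌₁) - f(x|ₓₚ₌₀))`; the bracket does not
depend on `xₚ`, so the second term has expectation `E[xₚ] · E[…] = 0`. Removing the variables one
at a time gives `E[f(Y)] = f(0) = det C`, which is `z ^ N` for `C = z • 1` and `M ≥ 1`.
-/

open MeasureTheory ProbabilityTheory Matrix Finset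

theorem List.exists_prod_ofFn_update_eq_mul_mul {α : Type*} [Monoid α] {n : ℕ} (f : Fin n → α)
    (k : Fin n) : ∃ L R : α, ∀ b, (List.ofFn (Function.update f k b)).prod = L * b * R := by
  refine ⟨((List.ofFn f).take k).prod, ((List.ofFn f).drop (k + 1)).prod, fun b => ?_⟩
  have hset : List.ofFn (Function.update f k b) = (List.ofFn f).set k b := by
    apply List.ext_getElem (by simp)
    intro m _ _
    simp only [List.getElem_ofFn, List.getElem_set, Function.update_apply]
    split_ifs <;> simp_all [Fin.ext_iff]
  rw [hset, List.prod_set]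
  simp

theorem Matrix.exists_det_add_smul_vecMulVec {n R : Type*} [Fintype n] [DecidableEq n]
    [CommRing R] (C : Matrix n n R) (u w : n → R) :
    ∃ a b : R, ∀ t, (C + t • vecMulVec u w).det = a + t * b := by
  let A : Matrix (n ⊕ Unit) (n ⊕ Unit) R := fromBlocks C 0 (replicateRow Unit w) 1
  let col : R → n ⊕ Unit → R := fun t => Sum.elim (-(t • u)) 1
  refine ⟨(A.updateCol (.inr ()) (col 0)).det, (A.updateCol (.inr ()) (Sum.elim (-u) 0)).det,
    fun t => ?_⟩
  have hschur : C + t • vecMulVec u w = C - replicateCol Unit (-(t • u)) * replicateRow Unit w := by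
    ext i j
    simp [vecMulVec_apply, mul_apply, mul_assoc]
  have hbordered : fromBlocks C (replicateCol Unit (-(t • u))) (replicateRow Unit w) 1
      = A.updateCol (.inr ()) (col 0 + t • Sum.elim (-u) 0) := by
    ext (i | i) (j | j) <;> simp [A, col]
  rw [hschur, ← det_fromBlocks_one₂₂, hbordered, det_updateCol_add, det_updateCol_smul]

def IsMultiaffine {ι R : Type*} [DecidableEq ι] [CommRing R] (f : (ι → R) → R) : Prop :=
  ∀ v p, ∃ a b : R, ∀ t, f (Function.update v p t) = a + t * b

theorem IsMultiaffine.apply_eq {ι R : Type*} [DecidableEq ι] [CommRing R] {f : (ι → R) → R}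
    (hf : IsMultiaffine f) (v : ι → R) (p : ι) :
    f v = f (Function.update v p 0)
      + v p * (f (Function.update v p 1) - f (Function.update v p 0)) := by
  obtain ⟨a, b, hab⟩ := hf v p
  have hv := hab (v p)
  rw [Function.update_eq_self] at hv
  rw [hv, hab 0, hab 1]
  ring

section DetSubProd

variable {n R : Type*} [Fintype n] [DecidableEq n] [CommRing R] {M : ℕ}

theorem isMultiaffine_det_sub_prod (C : Matrix n n R) :
    IsMultiaffine fun v : Fin M × n × n → R =>
      (C - (List.ofFn fun k => of fun i j => v (k, i, j)).prod).det := by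
  rintro v ⟨k, i, j⟩
  let X : R → Fin M → Matrix n n R := fun t k' =>
    of fun i' j' => Function.update v (k, i, j) t (k', i', j')
  have hX : ∀ t, X t = Function.update (X 0) k
      (X 0 k + t • vecMulVec (Pi.single i 1) (Pi.single j 1)) := by
    intro t
    ext k' i' j'
    by_cases hk : k' = k <;> by_cases hi : i' = i <;> by_cases hj : j' = j <;>
      simp [X, hk, hi, hj, vecMulVec_apply]
  obtain ⟨P, Q, hPQ⟩ := List.exists_prod_ofFn_update_eq_mul_mul (X 0) k
  obtain ⟨a, b, hab⟩ := exists_det_add_smul_vecMulVec (C - P * X 0 k * Q)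
    (P *ᵥ Pi.single i 1) (Pi.single j 1 ᵥ* Q)
  refine ⟨a, -b, fun t => ?_⟩
  have hrankOne : C - (List.ofFn (X t)).prod
      = C - P * X 0 k * Q + (-t) • vecMulVec (P *ᵥ Pi.single i 1) (Pi.single j 1 ᵥ* Q) := by
    rw [hX t, hPQ, Matrix.mul_add, Matrix.add_mul, Matrix.mul_smul, Matrix.smul_mul,
      mul_vecMulVec, vecMulVec_mul]
    module
  change (C - (List.ofFn (X t)).prod).det = _
  rw [hrankOne, hab]
  ring

theorem continuous_det_sub_prod [TopologicalSpace R] [IsTopologicalRing R] (C : Matrix n n R) :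
    Continuous fun v : Fin M × n × n → R =>
      (C - (List.ofFn fun k => of fun i j => v (k, i, j)).prod).det := by
  refine (continuous_const.sub ?_).matrix_det
  simp only [List.ofFn_eq_map]
  exact continuous_list_prod _ fun k _ => continuous_matrix fun i j => continuous_apply _

theorem det_sub_prod_zero (hM : M ≠ 0) (C : Matrix n n R) :
    (C - (List.ofFn fun k => of fun i j => (0 : Fin M × n × n → R) (k, i, j)).prod).det
      = C.det := by
  have hzero : (of fun _ _ => 0 : Matrix n n R) = 0 := rfl
  simp [List.ofFn_const, hzero, hM]

end DetSubProd

section Expectation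

variable {Ω ι : Type*} [MeasurableSpace Ω] {μ : Measure Ω} [DecidableEq ι]

theorem ProbabilityTheory.iIndepFun.indepFun_comp_piecewise {β γ : Type*} [MeasurableSpace β]
    [MeasurableSpace γ] {Y : ι → Ω → β} (hY : iIndepFun Y μ) (hYm : ∀ p, AEMeasurable (Y p) μ)
    {T : Finset ι} {p : ι} (hp : p ∉ T) {g : (ι → β) → γ} (hg : Measurable g) (w : ι → β) :
    IndepFun (Y p) (fun ω => g (T.piecewise (Y · ω) w)) μ := by
  let extend : (T → β) → ι → β := fun y q => if h : q ∈ T then y ⟨q, h⟩ else w q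
  have hextend : Measurable extend := by
    refine measurable_pi_lambda _ fun q => ?_
    by_cases h : q ∈ T <;> simp only [extend, h, dite_true, dite_false] <;> fun_prop
  have hpiece : ∀ ω, T.piecewise (Y · ω) w = extend fun i : T => Y i ω := fun ω => by
    ext q
    by_cases h : q ∈ T <;> simp [extend, h]
  simp_rw [hpiece]
  exact (hY.indepFun_finset₀ {p} T (disjoint_singleton_left.mpr hp) hYm).comp
    (measurable_pi_apply ⟨p, mem_singleton_self p⟩) (hg.comp hextend)

variable {𝕜 : Type*} [RCLike 𝕜] [IsProbabilityMeasure μ] {f : (ι → 𝕜) → 𝕜} {Y : ι → Ω → 𝕜}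

theorem IsMultiaffine.integrable_and_integral_comp_piecewise (hf : IsMultiaffine f)
    (hfm : Measurable f) (hY : iIndepFun Y μ) (hint : ∀ p, Integrable (Y p) μ)
    (hmean : ∀ p, ∫ ω, Y p ω ∂μ = 0) (T : Finset ι) (w : ι → 𝕜) :
    Integrable (fun ω => f (T.piecewise (Y · ω) w)) μ ∧
      ∫ ω, f (T.piecewise (Y · ω) w) ∂μ = f (T.piecewise 0 w) := by
  induction T using Finset.induction_on generalizing w with
  | empty => simp
  | @insert p T hp ih =>
    set A := fun ω => f (T.piecewise (Y · ω) (Function.update w p 0))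
    set B := fun ω => f (T.piecewise (Y · ω) (Function.update w p 1))
    have hsplit : (fun ω => f ((insert p T).piecewise (Y · ω) w)) = A + Y p * (B - A) := by
      ext ω
      rw [hf.apply_eq _ p]
      simp [A, B, Finset.piecewise_insert, Finset.update_piecewise_of_notMem _ _ _ hp]
    have hindep : IndepFun (Y p) (B - A) μ := by
      have hBA : B - A = fun ω => f (Function.update (T.piecewise (Y · ω) w) p 1)
          - f (Function.update (T.piecewise (Y · ω) w) p 0) := by
        ext ω
        simp only [A, B, Pi.sub_apply, Finset.update_piecewise_of_notMem _ _ _ hp]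
      rw [hBA]
      exact hY.indepFun_comp_piecewise (fun q => (hint q).aemeasurable) hp
        (g := fun v => f (Function.update v p 1) - f (Function.update v p 0)) (by fun_prop) w
    have hBA : Integrable (B - A) μ := (ih _).1.sub (ih _).1
    have hprod : Integrable (Y p * (B - A)) μ := hindep.integrable_mul (hint p) hBA
    refine ⟨hsplit ▸ (ih _).1.add hprod, ?_⟩
    rw [hsplit, Pi.add_def, integral_add (ih _).1 hprod,
      hindep.integral_mul_eq_mul_integral (hint p).1 hBA.1, hmean, zero_mul, add_zero, (ih _).2,
      Finset.piecewise_insert, Finset.update_piecewise_of_notMem _ _ _ hp, Pi.zero_apply]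

theorem IsMultiaffine.integrable_and_integral_comp [Fintype ι] (hf : IsMultiaffine f)
    (hfm : Measurable f) (hY : iIndepFun Y μ) (hint : ∀ p, Integrable (Y p) μ)
    (hmean : ∀ p, ∫ ω, Y p ω ∂μ = 0) :
    Integrable (fun ω => f (Y · ω)) μ ∧ ∫ ω, f (Y · ω) ∂μ = f 0 := by
  simpa using hf.integrable_and_integral_comp_piecewise hfm hY hint hmean univ 0

theorem integrable_and_integral_det_sub_prod {n : Type*} [Fintype n] [DecidableEq n] {M : ℕ}
    (hM : M ≠ 0) (C : Matrix n n 𝕜) {X : Fin M → Ω → Matrix n n 𝕜}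
    (hindep : iIndepFun (fun (p : Fin M × n × n) ω => X p.1 ω p.2.1 p.2.2) μ)
    (hint : ∀ k i j, Integrable (fun ω => X k ω i j) μ)
    (hmean : ∀ k i j, ∫ ω, X k ω i j ∂μ = 0) :
    Integrable (fun ω => (C - (List.ofFn fun k => X k ω).prod).det) μ ∧
      ∫ ω, (C - (List.ofFn fun k => X k ω).prod).det ∂μ = C.det := by
  have h := (isMultiaffine_det_sub_prod C).integrable_and_integral_comp
    (Y := fun p ω => X p.1 ω p.2.1 p.2.2) (continuous_det_sub_prod C).measurable hindep
    (fun p => hint ..) (fun p => hmean ..)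
  rw [det_sub_prod_zero hM C] at h
  exact h

end Expectation

theorem average_single_char_poly_product_general
    {Ω : Type*} [MeasurableSpace Ω] (μ : Measure Ω) [IsProbabilityMeasure μ]
    (N M : ℕ) (hM : 1 ≤ M)
    (X : Fin M → Ω → Matrix (Fin N) (Fin N) ℂ)
    (hindep : iIndepFun
      (fun (p : Fin M × Fin N × Fin N) ω => X p.1 ω p.2.1 p.2.2) μ)
    (hL2 : ∀ k i j, MemLp (fun ω => X k ω i j) 2 μ)
    (hmean : ∀ k i j, ∫ ω, X k ω i j ∂μ = 0) :
    ∀ z : ℂ,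
      Integrable (fun ω =>
        (z • (1 : Matrix (Fin N) (Fin N) ℂ) - (List.ofFn fun k => X k ω).prod).det) μ ∧
      ∫ ω, (z • (1 : Matrix (Fin N) (Fin N) ℂ) - (List.ofFn fun k => X k ω).prod).det ∂μ
        = z ^ N := by
  intro z
  simpa using integrable_and_integral_det_sub_prod (Nat.one_le_iff_ne_zero.mp hM) (z • 1) hindep
    (fun k i j => (hL2 k i j).integrable one_le_two) hmean

/-- For independent Wigner matrices, the average of a single characteristic polynomial of the
(non-hermitised) product `X₁⋯X_M` is trivial: `E[det(z·I − X₁⋯X_M)] = z^N`. -/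
theorem average_single_char_poly_product
    {Ω : Type*} [MeasurableSpace Ω] (μ : Measure Ω) [IsProbabilityMeasure μ]
    (N M : ℕ) (hN : 1 ≤ N) (hM : 1 ≤ M)
    (σ : Fin M → ℝ) (hσ : ∀ k, 0 < σ k)
    (X : Fin M → Ω → Matrix (Fin N) (Fin N) ℂ)
    (hindep : iIndepFun
      (fun (p : Fin M × Fin N × Fin N) ω => X p.1 ω p.2.1 p.2.2) μ)
    (hL2 : ∀ k i j, MemLp (fun ω => X k ω i j) 2 μ)
    (hmean : ∀ k i j, ∫ ω, X k ω i j ∂μ = 0)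
    (hvar : ∀ k i j, ∫ ω, ‖X k ω i j‖ ^ 2 ∂μ = (σ k) ^ 2) :
    ∀ z : ℂ,
      Integrable (fun ω =>
        (z • (1 : Matrix (Fin N) (Fin N) ℂ) - (List.ofFn fun k => X k ω).prod).det) μ ∧
      ∫ ω, (z • (1 : Matrix (Fin N) (Fin N) ℂ) - (List.ofFn fun k => X k ω).prod).det ∂μ
        = z ^ N :=
  average_single_char_poly_product_general μ N M hM X hindep hL2 hmean
end

section
/- Let N ≥ 1 and 1 ≤ r ≤ N, and let X be a random N×N complex matrix whose entries x_{i,j} form a jointly independent family of complex random variables with E[x_{i,j}] = 0 and E[|x_{i,j}|^2] = σ^2 for some σ > 0. Let K, K̃, L, L̃ ⊆ {1,…,N} be subsets of cardinality r. Then the random variable det(X[K, K̃]) · det(X^*[L̃, L]) is integrable, and its expectation equals r! σ^{2r} if K = L and K̃ = L̃, and equals 0 otherwise. -/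
/-!
Expand both minors by the Leibniz formula. The term of a pair of permutations `(π, ρ)` is, up to
sign, the product of the entries of `X` at the positions `(K(π i), K̃ i)` times the conjugates of
the entries at `(L(ρ i), L̃ i)`. By independence and centring its expectation vanishes unless the
two position sets coincide, and then it is `σ^{2r}`. The position sets recover `K, K̃` and `L, L̃`
by projection, and the permutation from them, so they coincide exactly when `K = L`, `K̃ = L̃` and
`π = ρ`; the `r!` surviving terms have sign `sign π ^ 2 = 1`.
-/

open MeasureTheory ProbabilityTheory Matrix Finset

namespace ProbabilityTheory

variable {Ω ι : Type*} [MeasurableSpace Ω] {μ : Measure Ω} [Fintype ι]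

theorem iIndepFun.integrable_fun_prod_comp {𝕜 : Type*} [RCLike 𝕜] {𝓧 : ι → Type*}
    {m𝓧 : ∀ i, MeasurableSpace (𝓧 i)} {X : (i : ι) → Ω → 𝓧 i} {f : (i : ι) → 𝓧 i → 𝕜}
    (hX : iIndepFun X μ) (mX : ∀ i, AEMeasurable (X i) μ)
    (hf : ∀ i, AEStronglyMeasurable (f i) (μ.map (X i)))
    (hfX : ∀ i, Integrable (fun ω => f i (X i ω)) μ) :
    Integrable (fun ω => ∏ i, f i (X i ω)) μ := by
  have := hX.isProbabilityMeasure
  have hpi : Integrable (fun x : (i : ι) → 𝓧 i => ∏ i, f i (x i))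
      (Measure.pi fun i => μ.map (X i)) :=
    .fintype_prod_dep fun i => (integrable_map_measure (hf i) (mX i)).2 (hfX i)
  rw [← hX.map_fun_eq_pi_map mX] at hpi
  exact (integrable_map_measure hpi.1 (by fun_prop)).1 hpi

theorem integral_ite_mul_ite_star [IsProbabilityMeasure μ] {Z : Ω → ℂ} (hL2 : MemLp Z 2 μ)
    (hmean : ∫ ω, Z ω ∂μ = 0) (a b : Prop) [Decidable a] [Decidable b] :
    Integrable (fun ω => (if a then Z ω else 1) * (if b then star (Z ω) else 1)) μ ∧
      ∫ ω, (if a then Z ω else 1) * (if b then star (Z ω) else 1) ∂μ =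
        if a then (if b then ((∫ ω, ‖Z ω‖ ^ 2 ∂μ : ℝ) : ℂ) else 0) else (if b then 0 else 1) := by
  by_cases ha : a <;> by_cases hb : b <;> simp only [ha, hb, if_true, if_false, mul_one, one_mul]
  · have hmul_star : ∀ z : ℂ, z * star z = ((‖z‖ ^ 2 : ℝ) : ℂ) := fun z => by
      rw [RCLike.star_def, Complex.mul_conj']; norm_cast
    simp only [hmul_star]
    exact ⟨((memLp_two_iff_integrable_sq_norm hL2.1).1 hL2).ofReal, integral_complex_ofReal⟩
  · exact ⟨hL2.integrable one_le_two, hmean⟩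
  · refine ⟨hL2.star.integrable one_le_two, ?_⟩
    simp only [RCLike.star_def, integral_conj, hmean, map_zero]
  · simp

theorem iIndepFun.integral_prod_mul_prod_star [DecidableEq ι] {Z : ι → Ω → ℂ} (hZ : iIndepFun Z μ)
    (hL2 : ∀ i, MemLp (Z i) 2 μ) (hmean : ∀ i, ∫ ω, Z i ω ∂μ = 0) (s t : Finset ι) :
    Integrable (fun ω => (∏ i ∈ s, Z i ω) * ∏ i ∈ t, star (Z i ω)) μ ∧
      ∫ ω, (∏ i ∈ s, Z i ω) * ∏ i ∈ t, star (Z i ω) ∂μ =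
        if s = t then ∏ i ∈ s, ((∫ ω, ‖Z i ω‖ ^ 2 ∂μ : ℝ) : ℂ) else 0 := by
  have := hZ.isProbabilityMeasure
  set f : ι → ℂ → ℂ := fun i z => (if i ∈ s then z else 1) * (if i ∈ t then star z else 1)
  have hprod : ∀ ω, (∏ i ∈ s, Z i ω) * ∏ i ∈ t, star (Z i ω) = ∏ i, f i (Z i ω) := fun ω => by
    simp only [f, prod_mul_distrib, prod_ite_mem, univ_inter]
  have hf : ∀ i, AEStronglyMeasurable (f i) (μ.map (Z i)) := fun i =>
    Continuous.aestronglyMeasurable (by simp only [f]; split_ifs <;> fun_prop)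
  have hfactor i := integral_ite_mul_ite_star (hL2 i) (hmean i) (i ∈ s) (i ∈ t)
  simp only [hprod]
  refine ⟨hZ.integrable_fun_prod_comp (fun i => (hL2 i).1.aemeasurable) hf
    (fun i => (hfactor i).1), ?_⟩
  rw [hZ.integral_fun_prod_comp (fun i => (hL2 i).1.aemeasurable) hf]
  simp only [f, fun i => (hfactor i).2]
  split_ifs with hst
  · subst hst
    rw [← univ_inter s, ← prod_ite_mem]
    exact prod_congr rfl fun i _ => by by_cases hs : i ∈ s <;> simp [hs]
  · obtain ⟨i, hi⟩ : ∃ i, ¬(i ∈ s ↔ i ∈ t) := by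
      by_contra! h; exact hst (Finset.ext h)
    exact prod_eq_zero (mem_univ i) (by by_cases hs : i ∈ s <;> simp_all)

end ProbabilityTheory

open Equiv

namespace Matrix

variable {n α β : Type*} [Fintype n] [DecidableEq α] [DecidableEq β]

/-- The entries `(a (π i), b i)` picked out by the term of `π` in the Leibniz expansion of
`det (M.submatrix a b)`. -/
def permPairs (a : n → α) (b : n → β) (π : Perm n) : Finset (α × β) :=
  univ.image fun i => (a (π i), b i)

variable {a : n → α} {b : n → β}

omit [Fintype n] [DecidableEq α] [DecidableEq β] in
theorem injective_permPairs_fun (π : Perm n) (hb : Function.Injective b) :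
    Function.Injective fun i => (a (π i), b i) :=
  fun _ _ h => hb (congrArg Prod.snd h)

theorem card_permPairs (π : Perm n) (hb : Function.Injective b) :
    #(permPairs a b π) = Fintype.card n := by
  rw [permPairs, card_image_of_injective _ (injective_permPairs_fun π hb), card_univ]

theorem image_fst_permPairs (π : Perm n) : (permPairs a b π).image Prod.fst = univ.image a := by
  ext x
  simp [permPairs, π.surjective.exists (p := fun i => a i = x)]

theorem image_snd_permPairs (π : Perm n) : (permPairs a b π).image Prod.snd = univ.image b := by
  rw [permPairs, image_image]; rfl

theorem permPairs_inj (ha : Function.Injective a) (hb : Function.Injective b) {π ρ : Perm n} :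
    permPairs a b π = permPairs a b ρ ↔ π = ρ := by
  refine ⟨fun h => Equiv.ext fun i => ?_, fun h => h ▸ rfl⟩
  have hi : (a (π i), b i) ∈ permPairs a b ρ := h ▸ mem_image_of_mem _ (mem_univ i)
  obtain ⟨j, -, hj⟩ := mem_image.1 hi
  obtain rfl : j = i := hb (congrArg Prod.snd hj)
  exact ha (congrArg Prod.fst hj).symm

theorem det_submatrix_eq_sum_prod_permPairs [DecidableEq n] {R : Type*} [CommRing R]
    (M : Matrix α β R) (a : n → α) (hb : Function.Injective b) :
    (M.submatrix a b).det = ∑ π : Perm n, (Perm.sign π : ℤ) * ∏ p ∈ permPairs a b π, M p.1 p.2 := by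
  rw [det_apply']
  refine sum_congr rfl fun π _ => ?_
  rw [permPairs, prod_image fun i _ j _ h => injective_permPairs_fun π hb h]
  rfl

theorem det_submatrix_mul_det_conjTranspose_submatrix [DecidableEq n] {R : Type*} [CommRing R]
    [StarRing R] (M : Matrix α α R) {k kt l lt : n → α} (hkt : Function.Injective kt)
    (hlt : Function.Injective lt) :
    (M.submatrix k kt).det * (Mᴴ.submatrix lt l).det =
      ∑ π : Perm n, ∑ ρ : Perm n, ((Perm.sign π : ℤ) : R) * (Perm.sign ρ : ℤ) *
        ((∏ p ∈ permPairs k kt π, M p.1 p.2) * ∏ p ∈ permPairs l lt ρ, star (M p.1 p.2)) := by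
  rw [← conjTranspose_submatrix, det_conjTranspose, det_submatrix_eq_sum_prod_permPairs _ _ hkt,
    det_submatrix_eq_sum_prod_permPairs _ _ hlt, star_sum, sum_mul_sum]
  refine sum_congr rfl fun π _ => sum_congr rfl fun ρ _ => ?_
  rw [star_mul', star_prod, star_intCast]
  ring

end Matrix

theorem Finset.permPairs_orderEmbOfFin_eq_iff {α : Type*} [LinearOrder α] {r : ℕ}
    {K Kt L Lt : Finset α} (hK : #K = r) (hKt : #Kt = r) (hL : #L = r) (hLt : #Lt = r)
    {π ρ : Perm (Fin r)} :
    permPairs (K.orderEmbOfFin hK) (Kt.orderEmbOfFin hKt) π =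
        permPairs (L.orderEmbOfFin hL) (Lt.orderEmbOfFin hLt) ρ ↔ (K = L ∧ Kt = Lt) ∧ π = ρ := by
  refine ⟨fun h => ?_, by rintro ⟨⟨rfl, rfl⟩, rfl⟩; rfl⟩
  obtain rfl : K = L := by
    simpa only [image_fst_permPairs, image_orderEmbOfFin_univ] using congrArg (image Prod.fst) h
  obtain rfl : Kt = Lt := by
    simpa only [image_snd_permPairs, image_orderEmbOfFin_univ] using congrArg (image Prod.snd) h
  exact ⟨⟨rfl, rfl⟩,
    (permPairs_inj (orderEmbOfFin _ _).injective (orderEmbOfFin _ _).injective).1 h⟩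

theorem Finset.sum_sign_mul_sign_ite_permPairs_orderEmbOfFin {α R : Type*} [LinearOrder α]
    [CommRing R] {r : ℕ} {K Kt L Lt : Finset α} (hK : #K = r) (hKt : #Kt = r) (hL : #L = r)
    (hLt : #Lt = r) (x : R) :
    ∑ π : Perm (Fin r), ∑ ρ : Perm (Fin r), ((Perm.sign π : ℤ) : R) * (Perm.sign ρ : ℤ) *
        (if permPairs (K.orderEmbOfFin hK) (Kt.orderEmbOfFin hKt) π =
          permPairs (L.orderEmbOfFin hL) (Lt.orderEmbOfFin hLt) ρ then x else 0) =
      if K = L ∧ Kt = Lt then (r.factorial : R) * x else 0 := by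
  simp_rw [permPairs_orderEmbOfFin_eq_iff]
  split_ifs with h
  · simp [h, ← Int.cast_mul, ← Units.val_mul, Int.units_mul_self, Fintype.card_perm]
  · simp [h]

theorem ProbabilityTheory.integral_det_submatrix_mul_det_conjTranspose_submatrix
    {Ω α n : Type*} [MeasurableSpace Ω] {μ : Measure Ω} [Fintype α] [DecidableEq α] [Fintype n]
    [DecidableEq n] {X : Ω → Matrix α α ℂ} (hindep : iIndepFun (fun (p : α × α) ω => X ω p.1 p.2) μ)
    (hL2 : ∀ i j, MemLp (fun ω => X ω i j) 2 μ) (hmean : ∀ i j, ∫ ω, X ω i j ∂μ = 0) {v : ℝ}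
    (hvar : ∀ i j, ∫ ω, ‖X ω i j‖ ^ 2 ∂μ = v) {k kt l lt : n → α}
    (hkt : Function.Injective kt) (hlt : Function.Injective lt) :
    Integrable (fun ω => ((X ω).submatrix k kt).det * ((X ω)ᴴ.submatrix lt l).det) μ ∧
      ∫ ω, ((X ω).submatrix k kt).det * ((X ω)ᴴ.submatrix lt l).det ∂μ =
        ∑ π : Perm n, ∑ ρ : Perm n, ((Perm.sign π : ℤ) : ℂ) * (Perm.sign ρ : ℤ) *
          (if permPairs k kt π = permPairs l lt ρ then (v : ℂ) ^ Fintype.card n else 0) := by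
  have hmoment := hindep.integral_prod_mul_prod_star (fun p => hL2 p.1 p.2) (fun p => hmean p.1 p.2)
  simp_rw [det_submatrix_mul_det_conjTranspose_submatrix _ hkt hlt]
  have hterm := fun π ρ => (hmoment (permPairs k kt π) (permPairs l lt ρ)).1.const_mul
    (((Perm.sign π : ℤ) : ℂ) * (Perm.sign ρ : ℤ))
  refine ⟨integrable_finsetSum _ fun π _ => integrable_finsetSum _ fun ρ _ => hterm π ρ, ?_⟩
  rw [integral_finsetSum _ fun π _ => integrable_finsetSum _ fun ρ _ => hterm π ρ]
  refine sum_congr rfl fun π _ => ?_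
  rw [integral_finsetSum _ fun ρ _ => hterm π ρ]
  refine sum_congr rfl fun ρ _ => ?_
  rw [integral_const_mul, (hmoment _ _).2]
  simp only [hvar, prod_const, card_permPairs π hkt]

theorem expected_product_of_minors_general
    {Ω : Type*} [MeasurableSpace Ω] (μ : Measure Ω)
    (N r : ℕ)
    (σ : ℝ)
    (X : Ω → Matrix (Fin N) (Fin N) ℂ)
    (hindep : iIndepFun
      (fun (p : Fin N × Fin N) ω => X ω p.1 p.2) μ)
    (hL2 : ∀ i j, MemLp (fun ω => X ω i j) 2 μ)
    (hmean : ∀ i j, ∫ ω, X ω i j ∂μ = 0)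
    (hvar : ∀ i j, ∫ ω, ‖X ω i j‖ ^ 2 ∂μ = σ ^ 2)
    (K Kt L Lt : Finset (Fin N))
    (hK : K.card = r) (hKt : Kt.card = r) (hL : L.card = r) (hLt : Lt.card = r) :
    Integrable (fun ω =>
      ((X ω).submatrix (fun i : Fin r => (K.orderIsoOfFin hK i : Fin N))
          (fun j : Fin r => (Kt.orderIsoOfFin hKt j : Fin N))).det *
      ((X ω)ᴴ.submatrix (fun i : Fin r => (Lt.orderIsoOfFin hLt i : Fin N))
          (fun j : Fin r => (L.orderIsoOfFin hL j : Fin N))).det) μ ∧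
    ∫ ω, ((X ω).submatrix (fun i : Fin r => (K.orderIsoOfFin hK i : Fin N))
          (fun j : Fin r => (Kt.orderIsoOfFin hKt j : Fin N))).det *
        ((X ω)ᴴ.submatrix (fun i : Fin r => (Lt.orderIsoOfFin hLt i : Fin N))
          (fun j : Fin r => (L.orderIsoOfFin hL j : Fin N))).det ∂μ
      = if K = L ∧ Kt = Lt then (r.factorial : ℂ) * ((σ : ℂ)) ^ (2 * r) else 0 := by
  simp only [coe_orderIsoOfFin_apply]
  obtain ⟨hint, hintegral⟩ := integral_det_submatrix_mul_det_conjTranspose_submatrix hindep hL2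
    hmean hvar (orderEmbOfFin Kt hKt).injective (orderEmbOfFin Lt hLt).injective
  refine ⟨hint, ?_⟩
  rw [hintegral, Fintype.card_fin, sum_sign_mul_sign_ite_permPairs_orderEmbOfFin]
  simp [pow_mul]

/-- **Lemma 4, Eq. (14):** for a Wigner matrix `X` with i.i.d.-type independent entries of mean
zero and variance `σ²`, and subsets `K, K̃, L, L̃ ⊆ {1,…,N}` of cardinality `r`,
`E[det X[K,K̃] · det X*[L̃,L]] = r! σ^{2r}` if `K = L` and `K̃ = L̃`, and `= 0` otherwise. -/
theorem expected_product_of_minors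
    {Ω : Type*} [MeasurableSpace Ω] (μ : Measure Ω) [IsProbabilityMeasure μ]
    (N r : ℕ) (hN : 1 ≤ N) (hr1 : 1 ≤ r) (hrN : r ≤ N)
    (σ : ℝ) (hσ : 0 < σ)
    (X : Ω → Matrix (Fin N) (Fin N) ℂ)
    (hindep : iIndepFun
      (fun (p : Fin N × Fin N) ω => X ω p.1 p.2) μ)
    (hL2 : ∀ i j, MemLp (fun ω => X ω i j) 2 μ)
    (hmean : ∀ i j, ∫ ω, X ω i j ∂μ = 0)
    (hvar : ∀ i j, ∫ ω, ‖X ω i j‖ ^ 2 ∂μ = σ ^ 2)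
    (K Kt L Lt : Finset (Fin N))
    (hK : K.card = r) (hKt : Kt.card = r) (hL : L.card = r) (hLt : Lt.card = r) :
    Integrable (fun ω =>
      ((X ω).submatrix (fun i : Fin r => (K.orderIsoOfFin hK i : Fin N))
          (fun j : Fin r => (Kt.orderIsoOfFin hKt j : Fin N))).det *
      ((X ω)ᴴ.submatrix (fun i : Fin r => (Lt.orderIsoOfFin hLt i : Fin N))
          (fun j : Fin r => (L.orderIsoOfFin hL j : Fin N))).det) μ ∧
    ∫ ω, ((X ω).submatrix (fun i : Fin r => (K.orderIsoOfFin hK i : Fin N))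
          (fun j : Fin r => (Kt.orderIsoOfFin hKt j : Fin N))).det *
        ((X ω)ᴴ.submatrix (fun i : Fin r => (Lt.orderIsoOfFin hLt i : Fin N))
          (fun j : Fin r => (L.orderIsoOfFin hL j : Fin N))).det ∂μ
      = if K = L ∧ Kt = Lt then (r.factorial : ℂ) * ((σ : ℂ)) ^ (2 * r) else 0 :=
  expected_product_of_minors_general μ N r σ X hindep hL2 hmean hvar K Kt L Lt hK hKt hL hLt
end

section
/- Let N ≥ 1 and 1 ≤ r ≤ N, and let X be a random N×N complex matrix whose entries x_{i,j} form a jointly independent family of complex random variables with E[x_{i,j}] = 0 and E[|x_{i,j}|^2] = σ^2 for some σ > 0. Let K, L ⊆ {1,…,N} be subsets of cardinality r. Then the random variable det((X^* X)[K, L]) is integrable, and its expectation equals (N!/(N−r)!) σ^{2r} if K = L, and equals 0 otherwise. -/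
/-!
With `k`, `l` enumerating `K`, `L`, expanding the determinant and the product `Xᴴ * X` gives
`∑ τ ∑ f, sign τ * ∏ j, conj (x (f j) (k (τ j))) * x (f j) (l j)`. The entries are independent
and centred, so a term has nonzero mean only if both factors run over the same set of entries, and
then its mean is `σ ^ (2 r)`. Reading off column indices, this forces `K = L`, and then `f ∘ τ = f`.
The signed sum of the permutations fixing `f` is the determinant of the matrix `[f i = f j]`,
which is `1` for injective `f` and `0` otherwise; so the expectation counts the `N! / (N - r)!`
injections `f`.
-/

open MeasureTheory ProbabilityTheory Matrix Finset
open scoped ComplexConjugate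

namespace ProbabilityTheory

variable {Ω ι : Type*} [MeasurableSpace Ω] {μ : Measure Ω}

theorem iIndepFun.integrable_fun_finset_prod {𝕜 : Type*} [RCLike 𝕜] {f : ι → Ω → 𝕜}
    (hf : iIndepFun f μ) (hint : ∀ i, Integrable (f i) μ) (s : Finset ι) :
    Integrable (fun ω => ∏ i ∈ s, f i ω) μ := by
  have := hf.isProbabilityMeasure
  induction s using Finset.cons_induction with
  | empty => simp
  | cons i s hi ih =>
    have hindep := (hf.indepFun_finsetProd_of_notMem₀ (fun j => (hint j).aemeasurable) hi).symm
    simp_rw [Finset.prod_cons]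
    rw [Finset.prod_fn] at hindep
    exact hindep.integrable_mul (hint i) ih

end ProbabilityTheory

theorem Function.Injective.prodMk_of_right {α β γ : Type*} {g : α → γ} (hg : g.Injective)
    (f : α → β) : (fun a => (f a, g a)).Injective :=
  fun _ _ h => hg (congrArg Prod.snd h)

theorem Finset.prod_ite_mem_ite_mem {ι M : Type*} [Fintype ι] [DecidableEq ι]
    [CommMonoidWithZero M] (A B : Finset ι) (c : M) :
    ∏ p, (if p ∈ A then (if p ∈ B then c else 0) else (if p ∈ B then 0 else 1))
      = if A = B then c ^ #A else 0 := by
  split_ifs with hAB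
  · subst hAB
    simp +contextual [prod_ite_mem]
  · obtain ⟨p, hp⟩ : ∃ p, ¬(p ∈ A ↔ p ∈ B) := by
      simpa only [Finset.ext_iff, not_forall] using hAB
    refine Finset.prod_eq_zero (mem_univ p) ?_
    by_cases hA : p ∈ A <;> simp_all

theorem Fintype.prod_comp_mul_comp_eq_prod_image {κ ι M : Type*} [Fintype κ] [DecidableEq ι]
    [CommMonoid M] {a b : κ → ι} (ha : a.Injective) (hb : b.Injective) (f g : ι → M) :
    ∏ j, f (a j) * g (b j) = (∏ p ∈ univ.image a, f p) * ∏ p ∈ univ.image b, g p := by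
  rw [prod_mul_distrib, prod_image ha.injOn, prod_image hb.injOn]

section Moments

variable {Ω ι : Type*} [MeasurableSpace Ω] {μ : Measure Ω} {σ : ℝ}

theorem integral_ite_conj_mul_ite [IsProbabilityMeasure μ] {Y : Ω → ℂ}
    (hmean : ∫ ω, Y ω ∂μ = 0) (hvar : ∫ ω, ‖Y ω‖ ^ 2 ∂μ = σ ^ 2)
    (a b : Prop) [Decidable a] [Decidable b] :
    ∫ ω, (if a then conj (Y ω) else 1) * (if b then Y ω else 1) ∂μ
      = if a then (if b then (σ : ℂ) ^ 2 else 0) else (if b then 0 else 1) := by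
  split_ifs
  · simp_rw [Complex.conj_mul', ← Complex.ofReal_pow, integral_complex_ofReal, hvar]
  · simp [integral_conj, hmean]
  · simp [hmean]
  · simp

variable [Fintype ι] [DecidableEq ι] {Z : ι → Ω → ℂ}

theorem prod_conj_mul_prod_eq_prod_ite (A B : Finset ι) (z : ι → ℂ) :
    (∏ p ∈ A, conj (z p)) * ∏ p ∈ B, z p
      = ∏ p, (if p ∈ A then conj (z p) else 1) * (if p ∈ B then z p else 1) := by
  rw [prod_mul_distrib, prod_ite_mem, prod_ite_mem, univ_inter, univ_inter]

theorem integrable_prod_conj_mul_prod (hZ : iIndepFun Z μ) (hL2 : ∀ p, MemLp (Z p) 2 μ)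
    (A B : Finset ι) :
    Integrable (fun ω => (∏ p ∈ A, conj (Z p ω)) * ∏ p ∈ B, Z p ω) μ := by
  have := hZ.isProbabilityMeasure
  simp_rw [prod_conj_mul_prod_eq_prod_ite A B]
  refine (hZ.comp (fun p z => (if p ∈ A then conj z else 1) * (if p ∈ B then z else 1))
    (fun p => by split_ifs <;> fun_prop)).integrable_fun_finset_prod (fun p => ?_) univ
  have hconj : MemLp (fun ω => if p ∈ A then conj (Z p ω) else 1) 2 μ := by
    split_ifs
    · exact (hL2 p).star
    · exact memLp_const 1
  have hid : MemLp (fun ω => if p ∈ B then Z p ω else 1) 2 μ := by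
    split_ifs
    · exact hL2 p
    · exact memLp_const 1
  exact hconj.integrable_mul hid

theorem integral_prod_conj_mul_prod (hZ : iIndepFun Z μ) (hZm : ∀ p, AEMeasurable (Z p) μ)
    (hmean : ∀ p, ∫ ω, Z p ω ∂μ = 0) (hvar : ∀ p, ∫ ω, ‖Z p ω‖ ^ 2 ∂μ = σ ^ 2)
    (A B : Finset ι) :
    ∫ ω, (∏ p ∈ A, conj (Z p ω)) * ∏ p ∈ B, Z p ω ∂μ
      = if A = B then (σ : ℂ) ^ (2 * #A) else 0 := by
  have := hZ.isProbabilityMeasure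
  simp_rw [prod_conj_mul_prod_eq_prod_ite A B]
  rw [hZ.integral_fun_prod_comp
    (f := fun p z => (if p ∈ A then conj z else 1) * (if p ∈ B then z else 1)) hZm
    (fun p => by split_ifs <;> fun_prop)]
  simp_rw [integral_ite_conj_mul_ite (hmean _) (hvar _), prod_ite_mem_ite_mem, pow_mul]

variable {κ : Type*} [Fintype κ]

theorem integrable_prod_conj_mul_of_injective (hZ : iIndepFun Z μ)
    (hL2 : ∀ p, MemLp (Z p) 2 μ) {a b : κ → ι} (ha : a.Injective) (hb : b.Injective) :
    Integrable (fun ω => ∏ j, conj (Z (a j) ω) * Z (b j) ω) μ := by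
  have h ω := Fintype.prod_comp_mul_comp_eq_prod_image ha hb (fun p => conj (Z p ω)) (Z · ω)
  simp_rw [h]
  exact integrable_prod_conj_mul_prod hZ hL2 _ _

theorem integral_prod_conj_mul_of_injective (hZ : iIndepFun Z μ)
    (hZm : ∀ p, AEMeasurable (Z p) μ) (hmean : ∀ p, ∫ ω, Z p ω ∂μ = 0)
    (hvar : ∀ p, ∫ ω, ‖Z p ω‖ ^ 2 ∂μ = σ ^ 2) {a b : κ → ι} (ha : a.Injective)
    (hb : b.Injective) :
    ∫ ω, ∏ j, conj (Z (a j) ω) * Z (b j) ω ∂μ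
      = if univ.image a = univ.image b then (σ : ℂ) ^ (2 * Fintype.card κ) else 0 := by
  have h ω := Fintype.prod_comp_mul_comp_eq_prod_image ha hb (fun p => conj (Z p ω)) (Z · ω)
  simp_rw [h, integral_prod_conj_mul_prod hZ hZm hmean hvar, card_image_of_injective _ ha,
    card_univ]

end Moments

theorem Matrix.det_submatrix_conjTranspose_mul_self {R m n κ : Type*} [CommRing R] [StarRing R]
    [Fintype m] [Fintype κ] [DecidableEq κ] (M : Matrix m n R) (k l : κ → n) :
    ((Mᴴ * M).submatrix k l).det
      = ∑ τ : Equiv.Perm κ, ∑ f : κ → m,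
          (Equiv.Perm.sign τ : R) * ∏ j, star (M (f j) (k (τ j))) * M (f j) (l j) := by
  simp_rw [det_apply', submatrix_apply, mul_apply, conjTranspose_apply, prod_univ_sum,
    Fintype.piFinset_univ, mul_sum]

theorem Equiv.Perm.sum_sign_mul_ite_comp_eq {κ α R : Type*} [Fintype κ] [DecidableEq κ]
    [DecidableEq α] [CommRing R] (f : κ → α) :
    ∑ τ : Equiv.Perm κ, (Equiv.Perm.sign τ : R) * (if f ∘ τ = f then 1 else 0)
      = if f.Injective then 1 else 0 := by
  have hdet : (Matrix.of fun i j => if f i = f j then (1 : R) else 0).det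
      = ∑ τ : Equiv.Perm κ, (Equiv.Perm.sign τ : R) * (if f ∘ τ = f then 1 else 0) := by
    simp_rw [det_apply', of_apply, prod_boole, funext_iff, Function.comp_apply, mem_univ,
      true_implies]
  rw [← hdet]
  split_ifs with hf
  · rw [show (Matrix.of fun i j => if f i = f j then (1 : R) else 0) = 1 by
      ext i j
      simp [Matrix.one_apply, hf.eq_iff], det_one]
  · obtain ⟨i, j, hfij, hij⟩ := Function.not_injective_iff.1 hf
    exact det_zero_of_row_eq hij (funext fun k => by simp [hfij])

theorem Fintype.sum_ite_injective_eq_descFactorial {κ α R : Type*} [Fintype κ] [DecidableEq κ]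
    [Fintype α] [DecidableEq α] [CommSemiring R] :
    ∑ f : κ → α, (if f.Injective then (1 : R) else 0)
      = (Fintype.card α).descFactorial (Fintype.card κ) := by
  rw [sum_boole, ← Fintype.card_subtype,
    Fintype.card_congr (Equiv.subtypeInjectiveEquivEmbedding κ α), Fintype.card_embedding_eq]

theorem Finset.image_prodMk_comp_perm_eq_iff {κ α β : Type*} [Fintype κ] [DecidableEq κ]
    [DecidableEq α] [DecidableEq β] {k : κ → β} (hk : k.Injective) (f : κ → α) (τ : Equiv.Perm κ) :
    univ.image (fun j => (f j, k (τ j))) = univ.image (fun j => (f j, k j)) ↔ f ∘ τ = f := by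
  constructor
  · intro h
    funext j
    obtain ⟨j', -, hj'⟩ := mem_image.1 (h ▸ mem_image_of_mem _ (mem_univ j))
    obtain ⟨hf, hkj⟩ := Prod.mk.inj hj'
    rw [Function.comp_apply, ← hk hkj, hf]
  · intro h
    conv_lhs => rw [← h]
    change univ.image ((fun j => (f j, k j)) ∘ τ) = _
    rw [← image_image, image_univ_equiv]

section ExpectedMinor

variable {Ω m n κ : Type*} [MeasurableSpace Ω] {μ : Measure Ω} [Fintype m] [DecidableEq m]
  [Fintype n] [DecidableEq n] [Fintype κ] [DecidableEq κ] {X : Ω → Matrix m n ℂ} {σ : ℝ}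
  {k l : κ → n}

theorem integrable_det_submatrix_conjTranspose_mul_self
    (hX : iIndepFun (fun (p : m × n) ω => X ω p.1 p.2) μ)
    (hL2 : ∀ i j, MemLp (fun ω => X ω i j) 2 μ) (hk : k.Injective) (hl : l.Injective) :
    Integrable (fun ω => (((X ω)ᴴ * X ω).submatrix k l).det) μ := by
  simp_rw [det_submatrix_conjTranspose_mul_self, ← starRingEnd_apply]
  exact integrable_finsetSum _ fun τ _ => integrable_finsetSum _ fun f _ =>
    (integrable_prod_conj_mul_of_injective hX (fun p => hL2 p.1 p.2)
      ((hk.comp τ.injective).prodMk_of_right f) (hl.prodMk_of_right f)).const_mul _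

theorem integral_det_submatrix_conjTranspose_mul_self
    (hX : iIndepFun (fun (p : m × n) ω => X ω p.1 p.2) μ)
    (hL2 : ∀ i j, MemLp (fun ω => X ω i j) 2 μ) (hmean : ∀ i j, ∫ ω, X ω i j ∂μ = 0)
    (hvar : ∀ i j, ∫ ω, ‖X ω i j‖ ^ 2 ∂μ = σ ^ 2) (hk : k.Injective) (hl : l.Injective) :
    ∫ ω, (((X ω)ᴴ * X ω).submatrix k l).det ∂μ
      = ∑ τ : Equiv.Perm κ, ∑ f : κ → m, (Equiv.Perm.sign τ : ℂ) *
          if univ.image (fun j => (f j, k (τ j))) = univ.image (fun j => (f j, l j))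
          then (σ : ℂ) ^ (2 * Fintype.card κ) else 0 := by
  have hka (τ : Equiv.Perm κ) (f : κ → m) : (fun j => (f j, k (τ j))).Injective :=
    (hk.comp τ.injective).prodMk_of_right f
  have hlb (f : κ → m) : (fun j => (f j, l j)).Injective := hl.prodMk_of_right f
  have hint (τ : Equiv.Perm κ) (f : κ → m) :=
    integrable_prod_conj_mul_of_injective hX (fun p => hL2 p.1 p.2) (hka τ f) (hlb f)
  simp_rw [det_submatrix_conjTranspose_mul_self, ← starRingEnd_apply]
  rw [integral_finsetSum _ fun τ _ => integrable_finsetSum _ fun f _ => (hint τ f).const_mul _]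
  refine sum_congr rfl fun τ _ => ?_
  rw [integral_finsetSum _ fun f _ => (hint τ f).const_mul _]
  refine sum_congr rfl fun f _ => ?_
  rw [integral_const_mul, integral_prod_conj_mul_of_injective hX
    (fun p => (hL2 p.1 p.2).aestronglyMeasurable.aemeasurable) (fun p => hmean p.1 p.2)
    (fun p => hvar p.1 p.2) (hka τ f) (hlb f)]

theorem integral_det_principal_submatrix_conjTranspose_mul_self
    (hX : iIndepFun (fun (p : m × n) ω => X ω p.1 p.2) μ)
    (hL2 : ∀ i j, MemLp (fun ω => X ω i j) 2 μ) (hmean : ∀ i j, ∫ ω, X ω i j ∂μ = 0)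
    (hvar : ∀ i j, ∫ ω, ‖X ω i j‖ ^ 2 ∂μ = σ ^ 2) (hk : k.Injective) :
    ∫ ω, (((X ω)ᴴ * X ω).submatrix k k).det ∂μ
      = (Fintype.card m).descFactorial (Fintype.card κ) * (σ : ℂ) ^ (2 * Fintype.card κ) := by
  rw [integral_det_submatrix_conjTranspose_mul_self hX hL2 hmean hvar hk hk, sum_comm]
  simp_rw [image_prodMk_comp_perm_eq_iff hk, ← boole_mul _ ((σ : ℂ) ^ _), ← mul_assoc,
    ← sum_mul]
  rw [sum_congr rfl fun f _ => Equiv.Perm.sum_sign_mul_ite_comp_eq f,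
    Fintype.sum_ite_injective_eq_descFactorial]

theorem integral_det_submatrix_conjTranspose_mul_self_of_image_ne
    (hX : iIndepFun (fun (p : m × n) ω => X ω p.1 p.2) μ)
    (hL2 : ∀ i j, MemLp (fun ω => X ω i j) 2 μ) (hmean : ∀ i j, ∫ ω, X ω i j ∂μ = 0)
    (hvar : ∀ i j, ∫ ω, ‖X ω i j‖ ^ 2 ∂μ = σ ^ 2) (hk : k.Injective) (hl : l.Injective)
    (hkl : univ.image k ≠ univ.image l) :
    ∫ ω, (((X ω)ᴴ * X ω).submatrix k l).det ∂μ = 0 := by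
  rw [integral_det_submatrix_conjTranspose_mul_self hX hL2 hmean hvar hk hl]
  refine sum_eq_zero fun τ _ => sum_eq_zero fun f _ => ?_
  rw [if_neg, mul_zero]
  intro h
  have hsnd := congrArg (image Prod.snd) h
  rw [image_image, image_image] at hsnd
  change univ.image (k ∘ τ) = univ.image l at hsnd
  rw [← image_image, image_univ_equiv] at hsnd
  exact hkl hsnd

end ExpectedMinor

theorem expected_minor_of_hermitised_matrix_general
    {Ω : Type*} [MeasurableSpace Ω] (μ : Measure Ω)
    (N r : ℕ)
    (σ : ℝ)
    (X : Ω → Matrix (Fin N) (Fin N) ℂ)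
    (hindep : iIndepFun
      (fun (p : Fin N × Fin N) ω => X ω p.1 p.2) μ)
    (hL2 : ∀ i j, MemLp (fun ω => X ω i j) 2 μ)
    (hmean : ∀ i j, ∫ ω, X ω i j ∂μ = 0)
    (hvar : ∀ i j, ∫ ω, ‖X ω i j‖ ^ 2 ∂μ = σ ^ 2)
    (K L : Finset (Fin N)) (hK : K.card = r) (hL : L.card = r) :
    Integrable (fun ω =>
      (((X ω)ᴴ * X ω).submatrix (fun i : Fin r => (K.orderIsoOfFin hK i : Fin N))
          (fun j : Fin r => (L.orderIsoOfFin hL j : Fin N))).det) μ ∧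
    ∫ ω, (((X ω)ᴴ * X ω).submatrix (fun i : Fin r => (K.orderIsoOfFin hK i : Fin N))
          (fun j : Fin r => (L.orderIsoOfFin hL j : Fin N))).det ∂μ
      = if K = L then ((N.factorial : ℂ) / ((N - r).factorial : ℂ)) * ((σ : ℂ)) ^ (2 * r)
        else 0 := by
  have hk := (K.orderEmbOfFin hK).injective
  have hl := (L.orderEmbOfFin hL).injective
  refine ⟨integrable_det_submatrix_conjTranspose_mul_self hindep hL2 hk hl, ?_⟩
  split_ifs with hKL
  · subst hKL
    have hrN : r ≤ N := by simpa [hK] using K.card_le_univ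
    refine (integral_det_principal_submatrix_conjTranspose_mul_self hindep hL2 hmean hvar
      hk).trans ?_
    rw [Fintype.card_fin, Fintype.card_fin, Nat.descFactorial_eq_div hrN,
      Nat.cast_div (Nat.factorial_dvd_factorial (N.sub_le r))
        (Nat.cast_ne_zero.2 (Nat.factorial_ne_zero _))]
  · exact integral_det_submatrix_conjTranspose_mul_self_of_image_ne hindep hL2 hmean hvar hk hl
      (by simpa using hKL)

/-- **Lemma 4, Eq. (15):** for a Wigner matrix `X` with independent entries of mean zero and
variance `σ²`, and subsets `K, L ⊆ {1,…,N}` of cardinality `r`,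
`E[det (X*X)[K,L]] = (N!/(N−r)!) σ^{2r}` if `K = L`, and `= 0` otherwise. -/
theorem expected_minor_of_hermitised_matrix
    {Ω : Type*} [MeasurableSpace Ω] (μ : Measure Ω) [IsProbabilityMeasure μ]
    (N r : ℕ) (hN : 1 ≤ N) (hr1 : 1 ≤ r) (hrN : r ≤ N)
    (σ : ℝ) (hσ : 0 < σ)
    (X : Ω → Matrix (Fin N) (Fin N) ℂ)
    (hindep : iIndepFun
      (fun (p : Fin N × Fin N) ω => X ω p.1 p.2) μ)
    (hL2 : ∀ i j, MemLp (fun ω => X ω i j) 2 μ)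
    (hmean : ∀ i j, ∫ ω, X ω i j ∂μ = 0)
    (hvar : ∀ i j, ∫ ω, ‖X ω i j‖ ^ 2 ∂μ = σ ^ 2)
    (K L : Finset (Fin N)) (hK : K.card = r) (hL : L.card = r) :
    Integrable (fun ω =>
      (((X ω)ᴴ * X ω).submatrix (fun i : Fin r => (K.orderIsoOfFin hK i : Fin N))
          (fun j : Fin r => (L.orderIsoOfFin hL j : Fin N))).det) μ ∧
    ∫ ω, (((X ω)ᴴ * X ω).submatrix (fun i : Fin r => (K.orderIsoOfFin hK i : Fin N))
          (fun j : Fin r => (L.orderIsoOfFin hL j : Fin N))).det ∂μ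
      = if K = L then ((N.factorial : ℂ) / ((N - r).factorial : ℂ)) * ((σ : ℂ)) ^ (2 * r)
        else 0 :=
  expected_minor_of_hermitised_matrix_general μ N r σ X hindep hL2 hmean hvar K L hK hL
end

section
/- Fix N ≥ 1. For each M ≥ 1 let σ_1, …, σ_M > 0, set τ_M = σ_1⋯σ_M, and assume lim_{M→∞} τ_M^{1/M} = σ for some σ > 0. For each M, suppose the polynomial x ↦ Σ_{ν=0}^{N} (−1)^{N−ν} binom(N,ν)^{M+1} ((N−ν)!)^M τ_M^{2(N−ν)} x^ν (that is, τ_M^{2N} p_N^{(M)}(x/τ_M^2)) has N roots, all real and positive, listed in nondecreasing order as z_1^{(M)} ≤ z_2^{(M)} ≤ … ≤ z_N^{(M)} (with multiplicity). Then for every j ∈ {1,…,N}, lim_{M→∞} (1/(2M)) log z_j^{(M)} = (1/2)(log j + log σ^2). -/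
/-!
Write `e_k` for the `k`-th elementary symmetric function of the zeros `z_0 ≤ ⋯ ≤ z_{N-1}`; by
Vieta, `e_k = C(N,k)^(M+1) (k!)^M τ_M^(2k)`. For nonnegative nondecreasing zeros, `e_k` lies
between the product of the `k` largest zeros and `C(N,k)` times that product. Since the product
of the `N - j` largest zeros is `z_j` times the product of the `N - j - 1` largest, `z_j` agrees
with `e_{N-j} / e_{N-j-1} = C(N,N-j)/C(N,N-j-1) · (j+1)^M τ_M²` up to factors bounded above and
below independently of `M`. These factors disappear after taking `(1/M) log`, and
`(1/M) log τ_M → log σ`.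
-/

open Filter Finset

theorem esymm_eq_of_forall_sum_mul_pow_eq_prod_sub {R : Type*} [CommRing R] [IsDomain R]
    [Infinite R] {n : ℕ} (a : ℕ → R) (w : Fin n → R)
    (h : ∀ x : R, ∑ ν ∈ range (n + 1), a ν * x ^ ν = ∏ i, (x - w i)) {m : ℕ} (hm : m ≤ n) :
    (univ.val.map w).esymm m = (-1) ^ m * a (n - m) := by
  open Polynomial in
  have hpoly : ∑ ν ∈ range (n + 1), C (a ν) * X ^ ν = ((univ.val.map w).map (X - C ·)).prod := by
    rw [Multiset.map_map, ← Finset.prod_eq_multiset_prod]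
    refine Polynomial.funext fun x => ?_
    simpa [eval_finsetSum, eval_prod] using h x
  have hcoeff := congrArg (coeff · (n - m)) hpoly
  simp only [finsetSum_coeff, coeff_C_mul_X_pow] at hcoeff
  rw [Finset.sum_ite_eq, if_pos (by simp only [mem_range]; omega),
    Multiset.prod_X_sub_C_coeff _ (by simp), Multiset.card_map, card_val, card_univ,
    Fintype.card_fin, Nat.sub_sub_self hm] at hcoeff
  rw [hcoeff, ← mul_assoc, ← pow_add, Even.neg_one_pow ⟨m, rfl⟩, one_mul]

theorem card_Ici_eq_card_Ioi_add_one {ι : Type*} [PartialOrder ι] [LocallyFiniteOrderTop ι]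
    (j : ι) : #(Ici j) = #(Ioi j) + 1 := by
  classical
  rw [← Ioi_insert, card_insert_of_notMem (by simp)]

section OrderedSemiring

variable {R : Type*} [CommSemiring R] [LinearOrder R] [IsOrderedRing R]

theorem prod_le_prod_of_card_eq_of_forall_le {ι : Type*} {f : ι → R} {S T : Finset ι}
    (hST : #S = #T) (hf : ∀ i ∈ S, 0 ≤ f i) (hle : ∀ i ∈ S, ∀ j ∈ T, f i ≤ f j) :
    ∏ i ∈ S, f i ≤ ∏ j ∈ T, f j := by
  rcases S.eq_empty_or_nonempty with rfl | hS
  · rw [card_empty, eq_comm, card_eq_zero] at hST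
    simp [hST]
  obtain ⟨i₀, hi₀, hmax⟩ := S.exists_max_image f hS
  calc ∏ i ∈ S, f i ≤ ∏ _i ∈ S, f i₀ := prod_le_prod hf hmax
    _ = ∏ _j ∈ T, f i₀ := by simp [hST]
    _ ≤ ∏ j ∈ T, f j := prod_le_prod (fun _ _ => hf i₀ hi₀) (hle i₀ hi₀)

theorem prod_le_prod_of_isUpperSet {ι : Type*} [LinearOrder ι] {u : ι → R} (hu₀ : ∀ i, 0 ≤ u i)
    (hu : Monotone u) {S T : Finset ι} (hT : IsUpperSet (T : Set ι)) (hST : #S = #T) :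
    ∏ i ∈ S, u i ≤ ∏ i ∈ T, u i := by
  rw [← prod_inter_mul_prod_sdiff S T, ← prod_inter_mul_prod_sdiff T S, inter_comm T S]
  refine mul_le_mul_of_nonneg_left (prod_le_prod_of_card_eq_of_forall_le ?_ (fun i _ => hu₀ i) ?_)
    (prod_nonneg fun i _ => hu₀ i)
  · have hS := card_sdiff_add_card_inter S T
    have hT := card_sdiff_add_card_inter T S
    rw [inter_comm] at hT
    omega
  · intro i hi j hj
    rw [Finset.mem_sdiff] at hi hj
    exact hu (le_of_lt (lt_of_not_ge fun hji => hi.2 (hT hji hj.1)))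

theorem prod_le_esymm {ι : Type*} [Fintype ι] {u : ι → R} (hu₀ : ∀ i, 0 ≤ u i) (T : Finset ι) :
    ∏ i ∈ T, u i ≤ (univ.val.map u).esymm #T := by
  rw [esymm_map_val]
  exact single_le_sum (f := fun S => ∏ i ∈ S, u i) (fun S _ => prod_nonneg fun i _ => hu₀ i)
    (mem_powersetCard.2 ⟨subset_univ T, rfl⟩)

variable {ι : Type*} [Fintype ι] [LinearOrder ι] {u : ι → R}

theorem esymm_le_choose_mul_prod (hu₀ : ∀ i, 0 ≤ u i) (hu : Monotone u) {T : Finset ι}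
    (hT : IsUpperSet (T : Set ι)) :
    (univ.val.map u).esymm #T ≤ (Fintype.card ι).choose #T * ∏ i ∈ T, u i := by
  rw [esymm_map_val]
  calc ∑ S ∈ powersetCard #T univ, ∏ i ∈ S, u i ≤ #(powersetCard #T univ) • ∏ i ∈ T, u i :=
        sum_le_card_nsmul _ _ _ fun S hS =>
          prod_le_prod_of_isUpperSet hu₀ hu hT (mem_powersetCard.1 hS).2
    _ = (Fintype.card ι).choose #T * ∏ i ∈ T, u i := by
        rw [card_powersetCard, card_univ, nsmul_eq_mul]

variable [LocallyFiniteOrderTop ι]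

theorem esymm_succ_le_choose_mul_mul_esymm (hu₀ : ∀ i, 0 ≤ u i) (hu : Monotone u) (j : ι) :
    (univ.val.map u).esymm (#(Ioi j) + 1)
      ≤ (Fintype.card ι).choose (#(Ioi j) + 1) * (u j * (univ.val.map u).esymm #(Ioi j)) := by
  rw [← card_Ici_eq_card_Ioi_add_one]
  calc (univ.val.map u).esymm #(Ici j)
      ≤ (Fintype.card ι).choose #(Ici j) * ∏ i ∈ Ici j, u i :=
        esymm_le_choose_mul_prod hu₀ hu (by rw [coe_Ici]; exact isUpperSet_Ici j)
    _ ≤ (Fintype.card ι).choose #(Ici j) * (u j * (univ.val.map u).esymm #(Ioi j)) := by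
        rw [← mul_prod_Ioi_eq_prod_Ici]
        gcongr
        · exact hu₀ j
        · exact prod_le_esymm hu₀ _

theorem mul_esymm_le_choose_mul_esymm_succ (hu₀ : ∀ i, 0 ≤ u i) (hu : Monotone u) (j : ι) :
    u j * (univ.val.map u).esymm #(Ioi j)
      ≤ (Fintype.card ι).choose #(Ioi j) * (univ.val.map u).esymm (#(Ioi j) + 1) := by
  calc u j * (univ.val.map u).esymm #(Ioi j)
      ≤ u j * ((Fintype.card ι).choose #(Ioi j) * ∏ i ∈ Ioi j, u i) := by
        gcongr
        · exact hu₀ j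
        · exact esymm_le_choose_mul_prod hu₀ hu (by rw [coe_Ioi]; exact isUpperSet_Ioi j)
    _ = (Fintype.card ι).choose #(Ioi j) * ∏ i ∈ Ici j, u i := by
        rw [← mul_prod_Ioi_eq_prod_Ici]; ring
    _ ≤ (Fintype.card ι).choose #(Ioi j) * (univ.val.map u).esymm (#(Ioi j) + 1) := by
        rw [← card_Ici_eq_card_Ioi_add_one]
        gcongr
        exact prod_le_esymm hu₀ _

end OrderedSemiring

/-- By Vieta (`esymm_eq_wignerEsymm`), the `k`-th elementary symmetric function of the zeros of
`t^(2N) p_N^{(M)}(x / t²)`. -/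
noncomputable def wignerEsymm (N M : ℕ) (t : ℝ) (k : ℕ) : ℝ :=
  (N.choose k : ℝ) ^ (M + 1) * (k.factorial : ℝ) ^ M * t ^ (2 * k)

theorem choose_mul_wignerEsymm_succ (N M k : ℕ) (t : ℝ) :
    N.choose k * wignerEsymm N M t (k + 1)
      = N.choose (k + 1) * (((N - k : ℕ) : ℝ) ^ M * t ^ 2) * wignerEsymm N M t k := by
  have hchoose : (N.choose (k + 1) * (k + 1).factorial : ℝ)
      = N.choose k * k.factorial * (N - k : ℕ) := by
    rw [Nat.factorial_succ]
    exact_mod_cast by linear_combination k.factorial * Nat.choose_succ_right_eq N k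
  have hpow := congrArg (· ^ M) hchoose
  simp only [mul_pow] at hpow
  unfold wignerEsymm
  linear_combination (N.choose k * N.choose (k + 1) * t ^ (2 * (k + 1)) : ℝ) * hpow

section Wigner

variable {N M : ℕ} {t : ℝ}

theorem wignerEsymm_pos (ht : t ≠ 0) {k : ℕ} (hk : k ≤ N) : 0 < wignerEsymm N M t k := by
  have := Nat.choose_pos hk
  have := (even_two_mul k).pow_pos ht
  unfold wignerEsymm
  positivity

theorem esymm_eq_wignerEsymm {z : Fin N → ℝ}
    (hfact : ∀ x : ℂ, ∑ ν ∈ range (N + 1), (-1 : ℂ) ^ (N - ν) * (N.choose ν : ℂ) ^ (M + 1) *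
      ((N - ν).factorial : ℂ) ^ M * (t : ℂ) ^ (2 * (N - ν)) * x ^ ν = ∏ j, (x - (z j : ℂ)))
    {k : ℕ} (hk : k ≤ N) : (univ.val.map z).esymm k = wignerEsymm N M t k := by
  have hvieta := esymm_eq_of_forall_sum_mul_pow_eq_prod_sub (fun ν => (-1 : ℂ) ^ (N - ν) *
    (N.choose ν : ℂ) ^ (M + 1) * ((N - ν).factorial : ℂ) ^ M * (t : ℂ) ^ (2 * (N - ν))) _ hfact hk
  simp only [Nat.sub_sub_self hk, Nat.choose_symm hk, esymm_map_val] at hvieta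
  apply Complex.ofReal_injective
  rw [esymm_map_val]
  push_cast
  have hsign : (-1 : ℂ) ^ (k + k) = 1 := Even.neg_one_pow ⟨k, rfl⟩
  rw [hvieta, wignerEsymm]
  push_cast
  linear_combination ((N.choose k : ℂ) ^ (M + 1) * (k.factorial : ℂ) ^ M * (t : ℂ) ^ (2 * k)) * hsign

variable {z : Fin N → ℝ} (hz₀ : ∀ i, 0 ≤ z i) (hz : Monotone z) (ht : t ≠ 0)
  (he : ∀ k ≤ N, (univ.val.map z).esymm k = wignerEsymm N M t k)
include hz₀ hz ht he

theorem pow_mul_sq_le_choose_mul (j : Fin N) :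
    ((j : ℝ) + 1) ^ M * t ^ 2 ≤ N.choose (N - 1 - j) * z j := by
  have hbound := esymm_succ_le_choose_mul_mul_esymm hz₀ hz j
  have hid := choose_mul_wignerEsymm_succ N M #(Ioi j) t
  rw [Fin.card_Ioi] at hbound hid
  rw [he _ (by omega), he _ (by omega), Fintype.card_fin] at hbound
  rw [show ((N - (N - 1 - j) : ℕ) : ℝ) = j + 1 by norm_cast; omega] at hid
  set k := N - 1 - (j : ℕ)
  have hpos : 0 < (N.choose (k + 1) : ℝ) * wignerEsymm N M t k :=
    mul_pos (by exact_mod_cast Nat.choose_pos (by omega)) (wignerEsymm_pos ht (by omega))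
  refine le_of_mul_le_mul_right ?_ hpos
  calc ((j : ℝ) + 1) ^ M * t ^ 2 * (N.choose (k + 1) * wignerEsymm N M t k)
      = N.choose k * wignerEsymm N M t (k + 1) := by rw [hid]; ring
    _ ≤ N.choose k * (N.choose (k + 1) * (z j * wignerEsymm N M t k)) := by gcongr
    _ = N.choose k * z j * (N.choose (k + 1) * wignerEsymm N M t k) := by ring

theorem le_choose_mul_pow_mul_sq (j : Fin N) :
    z j ≤ N.choose (N - j) * (((j : ℝ) + 1) ^ M * t ^ 2) := by
  have hbound := mul_esymm_le_choose_mul_esymm_succ hz₀ hz j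
  have hid := choose_mul_wignerEsymm_succ N M #(Ioi j) t
  rw [Fin.card_Ioi] at hbound hid
  rw [he _ (by omega), he _ (by omega), Fintype.card_fin] at hbound
  rw [show ((N - (N - 1 - j) : ℕ) : ℝ) = j + 1 by norm_cast; omega] at hid
  rw [show N - j = N - 1 - j + 1 by omega]
  set k := N - 1 - (j : ℕ)
  refine le_of_mul_le_mul_right ?_ (wignerEsymm_pos ht (by omega) : 0 < wignerEsymm N M t k)
  calc z j * wignerEsymm N M t k ≤ N.choose k * wignerEsymm N M t (k + 1) := hbound
    _ = _ := by linear_combination hid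

end Wigner

theorem tendsto_log_div_of_tendsto_rpow_one_div {τ : ℕ → ℝ} {σ : ℝ} (hτ : ∀ M, 0 < τ M)
    (hσ : σ ≠ 0) (h : Tendsto (fun M : ℕ => τ M ^ ((1 : ℝ) / M)) atTop (nhds σ)) :
    Tendsto (fun M : ℕ => Real.log (τ M) / M) atTop (nhds (Real.log σ)) :=
  ((Real.continuousAt_log hσ).tendsto.comp h).congr fun M => by
    rw [Function.comp_apply, Real.log_rpow (hτ M), one_div_mul_eq_div]

theorem tendsto_log_pow_mul_sq_div {τ : ℕ → ℝ} {c l : ℝ} (hc : 0 < c) (hτ : ∀ M, 0 < τ M)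
    (h : Tendsto (fun M : ℕ => Real.log (τ M) / M) atTop (nhds l)) :
    Tendsto (fun M : ℕ => Real.log (c ^ M * τ M ^ 2) / M) atTop (nhds (Real.log c + 2 * l)) := by
  refine (tendsto_const_nhds.add (h.const_mul 2)).congr' ?_
  filter_upwards [eventually_ne_atTop 0] with M hM
  rw [Real.log_mul (pow_pos hc M).ne' (pow_pos (hτ M) 2).ne', Real.log_pow, Real.log_pow]
  field_simp
  push_cast
  ring

theorem tendsto_log_div_of_le_mul_of_le_mul {x y : ℕ → ℝ} {a b L : ℝ} (ha : 0 < a)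
    (hy : ∀ᶠ M in atTop, 0 < y M) (hlow : ∀ᶠ M in atTop, y M ≤ a * x M)
    (hup : ∀ᶠ M in atTop, x M ≤ b * y M)
    (hlim : Tendsto (fun M : ℕ => Real.log (y M) / M) atTop (nhds L)) :
    Tendsto (fun M : ℕ => Real.log (x M) / M) atTop (nhds L) := by
  have hconst (c : ℝ) : Tendsto (fun M : ℕ => (Real.log (y M) + c) / M) atTop (nhds L) := by
    simpa only [add_div, add_zero] using hlim.add (tendsto_const_div_atTop_nhds_zero_nat c)
  refine tendsto_of_tendsto_of_tendsto_of_le_of_le' (hconst (-Real.log a)) (hconst (Real.log b))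
    ?_ ?_ <;> filter_upwards [hy, hlow, hup] with M hyM hlowM hupM <;>
    refine div_le_div_of_nonneg_right ?_ M.cast_nonneg
  · have hxM : 0 < x M := pos_of_mul_pos_right (hyM.trans_le hlowM) ha.le
    rw [← sub_eq_add_neg, ← Real.log_div hyM.ne' ha.ne']
    exact Real.log_le_log (div_pos hyM ha) (div_le_of_le_mul₀ ha.le hxM.le (by linarith))
  · have hxM : 0 < x M := pos_of_mul_pos_right (hyM.trans_le hlowM) ha.le
    have hb : 0 < b := pos_of_mul_pos_left (hxM.trans_le hupM) hyM.le
    rw [add_comm, ← Real.log_mul hb.ne' hyM.ne']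
    exact Real.log_le_log hxM hupM

theorem lyapunov_limit_of_zeros_general
    (N : ℕ)
    (σs : (M : ℕ) → Fin M → ℝ) (hσs : ∀ M k, 0 < σs M k)
    (σ : ℝ) (hσ : 0 < σ)
    (hlim : Tendsto (fun M : ℕ => (∏ k, σs M k) ^ ((1 : ℝ) / M)) atTop (nhds σ))
    (z : (M : ℕ) → Fin N → ℝ)
    (hzpos : ∀ M, 1 ≤ M → ∀ j, 0 < z M j)
    (hzmono : ∀ M, 1 ≤ M → Monotone (z M))
    (hfact : ∀ M, 1 ≤ M → ∀ x : ℂ,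
      ∑ ν ∈ Finset.range (N + 1),
          (-1 : ℂ) ^ (N - ν) * (N.choose ν : ℂ) ^ (M + 1) * ((N - ν).factorial : ℂ) ^ M *
            (((∏ k, σs M k : ℝ) : ℂ)) ^ (2 * (N - ν)) * x ^ ν
        = ∏ j : Fin N, (x - (z M j : ℂ))) :
    ∀ j : Fin N,
      Tendsto (fun M : ℕ => (1 / (2 * (M : ℝ))) * Real.log (z M j)) atTop
        (nhds ((1 / 2) * (Real.log ((j : ℝ) + 1) + Real.log (σ ^ 2)))) := by
  intro j
  have hτ (M : ℕ) : 0 < ∏ k, σs M k := prod_pos fun k _ => hσs M k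
  have hy := tendsto_log_pow_mul_sq_div (c := (j : ℝ) + 1) (by positivity) hτ
    (tendsto_log_div_of_tendsto_rpow_one_div hτ hσ.ne' hlim)
  have hbounds : ∀ᶠ M in atTop,
      ((j : ℝ) + 1) ^ M * (∏ k, σs M k) ^ 2 ≤ N.choose (N - 1 - j) * z M j ∧ z M j ≤ N.choose (N - j) * (((j : ℝ) + 1) ^ M * (∏ k, σs M k) ^ 2) := by
    filter_upwards [eventually_ge_atTop 1] with M hM
    have he (k : ℕ) (hk : k ≤ N) := esymm_eq_wignerEsymm (hfact M hM) hk
    exact ⟨pow_mul_sq_le_choose_mul (fun i => (hzpos M hM i).le) (hzmono M hM) (hτ M).ne' he j,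
      le_choose_mul_pow_mul_sq (fun i => (hzpos M hM i).le) (hzmono M hM) (hτ M).ne' he j⟩
  have hz := tendsto_log_div_of_le_mul_of_le_mul (by exact_mod_cast Nat.choose_pos (by omega))
    (.of_forall fun M => mul_pos (by positivity) (pow_pos (hτ M) 2))
    (hbounds.mono fun _ => And.left) (hbounds.mono fun _ => And.right) hy
  rw [Real.log_pow, Nat.cast_two]
  exact (hz.const_mul (1 / 2)).congr fun M => by ring

/-- **Theorem 3 (Lyapunov-type limit of the zeros):** if the averaged characteristic polynomial
`Σ_{ν=0}^N (−1)^{N−ν} C(N,ν)^{M+1} ((N−ν)!)^M τ_M^{2(N−ν)} x^ν` of the hermitised product of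
`M` Wigner matrices with variances `σ_k² > 0` (where `τ_M = σ_1⋯σ_M` and
`τ_M^{1/M} → σ > 0`) factors as `∏_{j=1}^N (x − z_j^{(M)})` with real positive zeros listed in
nondecreasing order, then `(1/(2M)) log z_j^{(M)} → (1/2)(log j + log σ²)` for each `j`. -/
theorem lyapunov_limit_of_zeros
    (N : ℕ) (hN : 1 ≤ N)
    (σs : (M : ℕ) → Fin M → ℝ) (hσs : ∀ M k, 0 < σs M k)
    (σ : ℝ) (hσ : 0 < σ)
    (hlim : Tendsto (fun M : ℕ => (∏ k, σs M k) ^ ((1 : ℝ) / M)) atTop (nhds σ))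
    (z : (M : ℕ) → Fin N → ℝ)
    (hzpos : ∀ M, 1 ≤ M → ∀ j, 0 < z M j)
    (hzmono : ∀ M, 1 ≤ M → Monotone (z M))
    (hfact : ∀ M, 1 ≤ M → ∀ x : ℂ,
      ∑ ν ∈ Finset.range (N + 1),
          (-1 : ℂ) ^ (N - ν) * (N.choose ν : ℂ) ^ (M + 1) * ((N - ν).factorial : ℂ) ^ M *
            (((∏ k, σs M k : ℝ) : ℂ)) ^ (2 * (N - ν)) * x ^ ν
        = ∏ j : Fin N, (x - (z M j : ℂ))) :
    ∀ j : Fin N,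
      Tendsto (fun M : ℕ => (1 / (2 * (M : ℝ))) * Real.log (z M j)) atTop
        (nhds ((1 / 2) * (Real.log ((j : ℝ) + 1) + Real.log (σ ^ 2)))) :=
  lyapunov_limit_of_zeros_general N σs hσs σ hσ hlim z hzpos hzmono hfact
end

section
/- Fix N ≥ 1 and 0 < ε < 1/2, and set q = N/(N+ε) ∈ (0,1). For u ∈ ℂ with |u| ∉ ⋃_{j=1}^{N} (j−ε, j+ε), define ν_u = ⌊|u|⌋ if |u| < N and ν_u = N if |u| > N. Then there exist a constant C > 0 and M_0 ≥ 1 such that for all M ≥ M_0 and all u ∈ ℂ with |u| ∉ ⋃_{j=1}^{N} (j−ε, j+ε): | Q_N^{(M)}(u) − binom(N, ν_u) (−1)^{ν_u} (u^{ν_u}/ν_u!)^M | ≤ C q^M · |binom(N, ν_u) (u^{ν_u}/ν_u!)^M|. -/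
open Finset

/-- The rescaled polynomial `Q_N^{(M)}(u) = Σ_{k=0}^N C(N,k) (−1)^k (u^k/k!)^M`. -/
noncomputable def Qpoly (N M : ℕ) (u : ℂ) : ℂ :=
  ∑ k ∈ Finset.range (N + 1), (N.choose k : ℂ) * (-1) ^ k * (u ^ k / (k.factorial : ℂ)) ^ M

/-- The index `ν_u`: equal to `⌊|u|⌋` if `|u| < N`, and to `N` if `|u| > N`. -/
noncomputable def nuIdx (N : ℕ) (u : ℂ) : ℕ :=
  if ‖u‖ < N then ⌊‖u‖⌋₊ else N

/-! With `r = ‖u‖`, the moduli `a k = r ^ k / k!` have ratio `a (k + 1) / a k = r / (k + 1)`,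
so they increase while `k + 1 ≤ r` and decrease once `r ≤ k + 1`: the largest of
`a 0, …, a N` is `a ν_u`.
Keeping `r` at distance `ε` from the integers `1, …, N` bounds the two neighbouring ratios by
`N / (N + ε)`, so every other term of `Q_N^{(M)}(u)` is at most `q ^ M` times the dominant one,
and the binomial weights add up to at most `2 ^ N`. -/

section PowDivFactorial

variable {r : ℝ}

lemma pow_succ_div_factorial_succ (r : ℝ) (k : ℕ) :
    r ^ (k + 1) / (k + 1).factorial = r / (k + 1) * (r ^ k / k.factorial) := by
  push_cast [Nat.factorial_succ]
  field_simp
  ring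

lemma pow_succ_div_factorial_succ_le (hr : 0 ≤ r) {k : ℕ} (hk : r ≤ k + 1) :
    r ^ (k + 1) / (k + 1).factorial ≤ r ^ k / k.factorial := by
  rw [pow_succ_div_factorial_succ]
  exact mul_le_of_le_one_left (by positivity) (div_le_one_of_le₀ hk (by positivity))

lemma pow_div_factorial_le_succ {k : ℕ} (hk : (k : ℝ) + 1 ≤ r) :
    r ^ k / k.factorial ≤ r ^ (k + 1) / (k + 1).factorial := by
  have hr : 0 < r := by linarith [k.cast_nonneg (α := ℝ)]
  rw [pow_succ_div_factorial_succ]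
  exact le_mul_of_one_le_left (by positivity) ((one_le_div (by positivity)).2 hk)

lemma pow_div_factorial_mono {m n : ℕ} (hmn : m ≤ n) (hn : (n : ℝ) ≤ r) :
    r ^ m / m.factorial ≤ r ^ n / n.factorial := by
  induction n, hmn using Nat.le_induction with
  | base => rfl
  | succ n _ ih =>
    push_cast at hn
    exact (ih (by linarith)).trans (pow_div_factorial_le_succ hn)

lemma pow_div_factorial_anti (hr : 0 ≤ r) {m n : ℕ} (hrm : r ≤ m + 1) (hmn : m ≤ n) :
    r ^ n / n.factorial ≤ r ^ m / m.factorial :=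
  antitoneOn_nat_Ici_of_succ_le (f := fun k ↦ r ^ k / k.factorial)
    (fun k hk ↦ pow_succ_div_factorial_succ_le hr (by
      have : (m : ℝ) ≤ k := by exact_mod_cast hk
      linarith))
    (le_refl m) hmn hmn

variable {q : ℝ} {ν k : ℕ}

lemma pow_div_factorial_le_mul_of_lt (hr : 0 ≤ r) (hrν : r ≤ ν + 1) (hq : r ≤ q * (ν + 1))
    (hk : ν < k) : r ^ k / k.factorial ≤ q * (r ^ ν / ν.factorial) :=
  calc r ^ k / k.factorial ≤ r ^ (ν + 1) / (ν + 1).factorial :=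
        pow_div_factorial_anti hr (by push_cast; linarith) hk
    _ = r / (ν + 1) * (r ^ ν / ν.factorial) := pow_succ_div_factorial_succ r ν
    _ ≤ q * (r ^ ν / ν.factorial) := by
        gcongr
        rwa [div_le_iff₀ (by positivity)]

lemma pow_div_factorial_le_mul_of_gt (hνr : ν ≤ r) (hq : ν ≤ q * r) (hk : k < ν) :
    r ^ k / k.factorial ≤ q * (r ^ ν / ν.factorial) := by
  obtain ⟨n, rfl⟩ := Nat.exists_eq_add_of_lt hk
  push_cast at hνr hq
  have hr : 0 < r := by linarith [(k + n : ℕ).cast_nonneg (α := ℝ)]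
  have hratio : 1 ≤ q * (r / (k + n + 1)) := by
    rw [mul_div_assoc', one_le_div (by positivity)]
    exact hq
  calc r ^ k / k.factorial ≤ r ^ (k + n) / (k + n).factorial :=
        pow_div_factorial_mono (Nat.le_add_right k n) (by push_cast; linarith)
    _ ≤ q * (r / (k + n + 1)) * (r ^ (k + n) / (k + n).factorial) :=
        le_mul_of_one_le_left (by positivity) hratio
    _ = q * (r ^ (k + n + 1) / (k + n + 1).factorial) := by
        rw [pow_succ_div_factorial_succ, mul_assoc]; push_cast; rfl

end PowDivFactorial

def AvoidsAnnuli (N : ℕ) (ε r : ℝ) : Prop :=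
  ∀ j : ℕ, 1 ≤ j → j ≤ N → r ∉ Set.Ioo ((j : ℝ) - ε) ((j : ℝ) + ε)

section NuIdx

variable {N : ℕ} {ε : ℝ} {u : ℂ}

lemma nuIdx_le (N : ℕ) (u : ℂ) : nuIdx N u ≤ N := by
  unfold nuIdx
  split_ifs with h
  · exact (Nat.floor_lt (norm_nonneg u)).2 h |>.le
  · exact le_rfl

lemma nuIdx_le_norm (N : ℕ) (u : ℂ) : (nuIdx N u : ℝ) ≤ ‖u‖ := by
  unfold nuIdx
  split_ifs with h
  · exact Nat.floor_le (norm_nonneg u)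
  · exact not_lt.1 h

lemma norm_lt_nuIdx_add_one (h : nuIdx N u < N) : ‖u‖ < nuIdx N u + 1 := by
  unfold nuIdx at h ⊢
  split_ifs at h ⊢ with hu
  · exact Nat.lt_floor_add_one _
  · exact (lt_irrefl N h).elim

lemma nuIdx_add_le_norm (hu : AvoidsAnnuli N ε ‖u‖) (hν : 1 ≤ nuIdx N u) :
    nuIdx N u + ε ≤ ‖u‖ := by
  by_contra! h
  exact hu _ hν (nuIdx_le N u) ⟨by linarith [nuIdx_le_norm N u], h⟩

lemma norm_le_nuIdx_add_one_sub (hu : AvoidsAnnuli N ε ‖u‖) (hν : nuIdx N u < N) :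
    ‖u‖ ≤ nuIdx N u + 1 - ε := by
  by_contra! h
  refine hu (nuIdx N u + 1) le_add_self hν ⟨by push_cast; linarith, ?_⟩
  push_cast
  linarith [norm_lt_nuIdx_add_one hν]

lemma pow_div_factorial_le_nuIdx {k : ℕ} (hε : 0 < ε) (hu : AvoidsAnnuli N ε ‖u‖) (hk : k ≤ N)
    (hkν : k ≠ nuIdx N u) :
    ‖u‖ ^ k / k.factorial
      ≤ N / (N + ε) * (‖u‖ ^ nuIdx N u / (nuIdx N u).factorial) := by
  set ν := nuIdx N u
  have hNε : (0 : ℝ) < N + ε := by positivity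
  have hνN : (ν : ℝ) ≤ N := by exact_mod_cast nuIdx_le N u
  rcases hkν.lt_or_gt with hlt | hgt
  · have hr := nuIdx_add_le_norm hu (by omega)
    refine pow_div_factorial_le_mul_of_gt (nuIdx_le_norm N u) ?_ hlt
    rw [div_mul_eq_mul_div, le_div_iff₀ hNε]
    nlinarith
  · have hνlt : ν < N := hgt.trans_le hk
    have hr := norm_le_nuIdx_add_one_sub hu hνlt
    have hνsucc : (ν : ℝ) + 1 ≤ N := by exact_mod_cast hνlt
    refine pow_div_factorial_le_mul_of_lt (norm_nonneg u) (by linarith) ?_ hgt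
    rw [div_mul_eq_mul_div, le_div_iff₀ hNε]
    nlinarith

end NuIdx

lemma norm_natCast_mul_pow_div_factorial_pow (c k M : ℕ) (u : ℂ) :
    ‖(c : ℂ) * (u ^ k / k.factorial) ^ M‖ = c * (‖u‖ ^ k / k.factorial) ^ M := by
  simp [norm_pow]

lemma norm_Qpoly_sub_le {N M ν : ℕ} {u : ℂ} {q : ℝ} (hν : ν ≤ N) (hq : 0 ≤ q)
    (hdom : ∀ k ≤ N, k ≠ ν → ‖u‖ ^ k / k.factorial ≤ q * (‖u‖ ^ ν / ν.factorial)) :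
    ‖Qpoly N M u - (N.choose ν : ℂ) * (-1) ^ ν * (u ^ ν / ν.factorial) ^ M‖
      ≤ 2 ^ N * q ^ M * ‖(N.choose ν : ℂ) * (u ^ ν / ν.factorial) ^ M‖ := by
  set a : ℝ := ‖u‖ ^ ν / ν.factorial
  set s := (range (N + 1)).erase ν
  have hsplit : Qpoly N M u - (N.choose ν : ℂ) * (-1) ^ ν * (u ^ ν / ν.factorial) ^ M
      = ∑ k ∈ s, (N.choose k : ℂ) * (-1) ^ k * (u ^ k / k.factorial) ^ M := by
    rw [Qpoly, ← add_sum_erase _ _ (mem_range.2 (Nat.lt_succ_of_le hν)), add_sub_cancel_left]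
  have hterm : ∀ k ∈ s, ‖(N.choose k : ℂ) * (-1) ^ k * (u ^ k / k.factorial) ^ M‖
      ≤ N.choose k * (q ^ M * a ^ M) := by
    intro k hk
    rw [mul_right_comm, norm_mul, norm_natCast_mul_pow_div_factorial_pow, norm_pow, norm_neg,
      norm_one, one_pow, mul_one, ← mul_pow]
    gcongr
    exact hdom k (Nat.lt_succ_iff.1 (mem_range.1 (mem_of_mem_erase hk))) (ne_of_mem_erase hk)
  have hchoose : ∑ k ∈ s, (N.choose k : ℝ) ≤ 2 ^ N := by
    calc ∑ k ∈ s, (N.choose k : ℝ) ≤ ∑ k ∈ range (N + 1), (N.choose k : ℝ) :=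
          sum_le_sum_of_subset_of_nonneg (erase_subset _ _) (fun _ _ _ ↦ by positivity)
      _ = 2 ^ N := by exact_mod_cast Nat.sum_range_choose N
  have hone : (1 : ℝ) ≤ N.choose ν := by exact_mod_cast Nat.choose_pos hν
  calc _ ≤ ∑ k ∈ s, ‖(N.choose k : ℂ) * (-1) ^ k * (u ^ k / k.factorial) ^ M‖ :=
        hsplit ▸ norm_sum_le _ _
    _ ≤ ∑ k ∈ s, N.choose k * (q ^ M * a ^ M) := sum_le_sum hterm
    _ = (∑ k ∈ s, (N.choose k : ℝ)) * (q ^ M * a ^ M) := (sum_mul ..).symm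
    _ ≤ 2 ^ N * (q ^ M * a ^ M) := by gcongr
    _ ≤ 2 ^ N * q ^ M * (N.choose ν * a ^ M) := by
        rw [mul_assoc]
        gcongr
        exact le_mul_of_one_le_left (by positivity) hone
    _ = _ := by rw [norm_natCast_mul_pow_div_factorial_pow]

theorem Qpoly_asymptotics_away_from_annuli_general
    (N : ℕ) (ε : ℝ) (hε : 0 < ε) :
    ∃ C : ℝ, 0 < C ∧ ∃ M₀ : ℕ, 1 ≤ M₀ ∧ ∀ M : ℕ, M₀ ≤ M → ∀ u : ℂ,
      (∀ j : ℕ, 1 ≤ j → j ≤ N → ‖u‖ ∉ Set.Ioo ((j : ℝ) - ε) ((j : ℝ) + ε)) →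
      ‖Qpoly N M u - (N.choose (nuIdx N u) : ℂ) * (-1) ^ (nuIdx N u) *
          (u ^ (nuIdx N u) / ((nuIdx N u).factorial : ℂ)) ^ M‖
        ≤ C * ((N : ℝ) / ((N : ℝ) + ε)) ^ M *
          ‖(N.choose (nuIdx N u) : ℂ) * (u ^ (nuIdx N u) / ((nuIdx N u).factorial : ℂ)) ^ M‖ :=
  ⟨2 ^ N, by positivity, 1, le_rfl, fun _ _ _ hu ↦ norm_Qpoly_sub_le (nuIdx_le N _)
    (by positivity) fun _ hk hkν ↦ pow_div_factorial_le_nuIdx hε hu hk hkν⟩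

/-- **Proposition 5 (asymptotics away from the annuli):** with `q = N/(N+ε)`, uniformly for
`u` with `|u| ∉ ⋃_{j=1}^N (j−ε, j+ε)`,
`Q_N^{(M)}(u) = C(N,ν_u) (−1)^{ν_u} (u^{ν_u}/ν_u!)^M (1 + O(q^M))` as `M → ∞`. -/
theorem Qpoly_asymptotics_away_from_annuli
    (N : ℕ) (hN : 1 ≤ N) (ε : ℝ) (hε : 0 < ε) (hε' : ε < 1 / 2) :
    ∃ C : ℝ, 0 < C ∧ ∃ M₀ : ℕ, 1 ≤ M₀ ∧ ∀ M : ℕ, M₀ ≤ M → ∀ u : ℂ,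
      (∀ j : ℕ, 1 ≤ j → j ≤ N → ‖u‖ ∉ Set.Ioo ((j : ℝ) - ε) ((j : ℝ) + ε)) →
      ‖Qpoly N M u - (N.choose (nuIdx N u) : ℂ) * (-1) ^ (nuIdx N u) *
          (u ^ (nuIdx N u) / ((nuIdx N u).factorial : ℂ)) ^ M‖
        ≤ C * ((N : ℝ) / ((N : ℝ) + ε)) ^ M *
          ‖(N.choose (nuIdx N u) : ℂ) * (u ^ (nuIdx N u) / ((nuIdx N u).factorial : ℂ)) ^ M‖ :=
  Qpoly_asymptotics_away_from_annuli_general N ε hε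
end

section
/- Fix N ≥ 1 and ν ∈ {1,…,N}. Then, uniformly for w in compact subsets of ℂ, Q_N^{(M)}(ν + w/M) / [ binom(N, ν−1) (−1)^{ν−1} (ν^{ν−1}/(ν−1)!)^M ] converges, as M → ∞, to e^{w(1 − 1/ν)} · (1 − ((N+1−ν)/ν) e^{w/ν}). That is, for every compact set 𝒦 ⊂ ℂ and every δ > 0 there is M_0 such that for all M ≥ M_0 and all w ∈ 𝒦 the difference between the quotient and the limit function has modulus at most δ. -/
open Finset

/-!
Divide `Q_N^{(M)}(ν + w/M)` by its summand `k = ν - 1`. Since `ν + w/M = ν (1 + (w/ν)/M)`, the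
`k`-th summand becomes `a_k ρ_k^M (1 + (w/ν)/M)^{kM}` with
`ρ_k = (ν^k/k!) / (ν^{ν-1}/(ν-1)!)`. The sequence `ν^k/k!` is maximal exactly at `k = ν - 1` and
`k = ν`, so `ρ_k = 1` for these two summands and `ρ_k < 1` for all others. As
`(1 + z/M)^{cM} → e^{cz}` uniformly for bounded `z`, the two dominant summands tend to
`e^{w(1 - 1/ν)}` and `-((N+1-ν)/ν) e^{w}`, while all others decay geometrically.
-/

open Filter Topology Metric
open scoped Nat

theorem norm_pow_sub_pow_le {R : Type*} [SeminormedRing R] [NormOneClass R] {a b : R} {r : ℝ}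
    (ha : ‖a‖ ≤ r) (hb : ‖b‖ ≤ r) (n : ℕ) :
    ‖a ^ n - b ^ n‖ ≤ n * r ^ (n - 1) * ‖a - b‖ := by
  induction n with
  | zero => simp
  | succ n ih =>
    have hr : 0 ≤ r := (norm_nonneg a).trans ha
    have hrn : r * (n * r ^ (n - 1)) = n * r ^ n := by
      rcases n with _ | n
      · simp
      · rw [Nat.add_sub_cancel, pow_succ]; ring
    calc ‖a ^ (n + 1) - b ^ (n + 1)‖ = ‖a * (a ^ n - b ^ n) + (a - b) * b ^ n‖ := by
          congr 1; rw [mul_sub, sub_mul, pow_succ' a, pow_succ' b]; abel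
      _ ≤ r * (n * r ^ (n - 1) * ‖a - b‖) + ‖a - b‖ * r ^ n := by
          refine (norm_add_le _ _).trans (add_le_add ((norm_mul_le _ _).trans ?_)
            ((norm_mul_le _ _).trans ?_))
          · exact mul_le_mul ha ih (norm_nonneg _) hr
          · exact mul_le_mul_of_nonneg_left ((norm_pow_le b n).trans
              (pow_le_pow_left₀ (norm_nonneg b) hb n)) (norm_nonneg _)
      _ = (n + 1 : ℕ) * r ^ (n + 1 - 1) * ‖a - b‖ := by
          rw [← mul_assoc, hrn, Nat.add_sub_cancel]; push_cast; ring

theorem tendstoUniformlyOn_of_norm_sub_le {ι α E : Type*} [SeminormedAddCommGroup E]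
    {l : Filter ι} {F : ι → α → E} {f : α → E} {s : Set α} {b : ι → ℝ}
    (hb : Tendsto b l (𝓝 0)) (h : ∀ᶠ i in l, ∀ x ∈ s, ‖F i x - f x‖ ≤ b i) :
    TendstoUniformlyOn F f l s := by
  refine Metric.tendstoUniformlyOn_iff.2 fun ε hε => ?_
  filter_upwards [h, hb.eventually (gt_mem_nhds hε)] with i hi hbi x hx
  rw [dist_eq_norm']
  exact (hi x hx).trans_lt hbi

theorem tendstoUniformlyOn_finset_sum {ι κ α E : Type*} [AddCommGroup E] [UniformSpace E]
    [IsUniformAddGroup E] {l : Filter ι} {s : Set α} {F : κ → ι → α → E} {f : κ → α → E}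
    (t : Finset κ) (h : ∀ k ∈ t, TendstoUniformlyOn (F k) (f k) l s) :
    TendstoUniformlyOn (fun i x => ∑ k ∈ t, F k i x) (fun x => ∑ k ∈ t, f k x) l s := by
  induction t using Finset.cons_induction with
  | empty => simpa using tendsto_const_nhds.tendstoUniformlyOn_const (g := fun _ : ι => (0 : E)) s
  | cons k t hk ih =>
    simp only [sum_cons]
    exact (h k (mem_cons_self k t)).add (ih fun j hj => h j (mem_cons_of_mem hj))

theorem TendstoUniformlyOn.const_mul {ι α R : Type*} [SeminormedRing R] {l : Filter ι}
    {F : ι → α → R} {f : α → R} {s : Set α} (h : TendstoUniformlyOn F f l s) (a : R) :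
    TendstoUniformlyOn (fun i x => a * F i x) (fun x => a * f x) l s :=
  (uniformContinuous_const_smul a).comp_tendstoUniformlyOn h

namespace Complex

theorem norm_one_add_le_exp_norm (u : ℂ) : ‖1 + u‖ ≤ Real.exp ‖u‖ :=
  (norm_add_le _ _).trans (by rw [norm_one, add_comm]; exact Real.add_one_le_exp _)

theorem norm_one_add_div_pow_sub_exp_le (c : ℕ) {M : ℕ} (hM : M ≠ 0) (z : ℂ) :
    ‖(1 + z / M) ^ (c * M) - exp (c * z)‖ ≤ c * ‖z‖ ^ 2 * Real.exp (c * ‖z‖) / M := by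
  set u := z / M
  have hexp : exp (c * z) = exp u ^ (c * M) := by
    rw [← exp_nat_mul]; congr 1; simp only [u]; push_cast; field_simp
  have hdiff : ‖1 + u - exp u‖ ≤ ‖u‖ ^ 2 * Real.exp ‖u‖ := by
    simpa [norm_sub_rev, sum_range_succ, add_comm] using norm_exp_sub_sum_le_norm_mul_exp u 2
  have hu : ‖u‖ = ‖z‖ / M := by simp [u]
  rcases Nat.eq_zero_or_pos c with rfl | hc
  · simp
  have key := norm_pow_sub_pow_le (norm_one_add_le_exp_norm u) (norm_exp_le_exp_norm u) (c * M)
  rw [hexp]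
  refine key.trans ?_
  calc ((c * M : ℕ) : ℝ) * Real.exp ‖u‖ ^ (c * M - 1) * ‖1 + u - exp u‖
      ≤ (c * M : ℕ) * Real.exp ‖u‖ ^ (c * M - 1) * (‖u‖ ^ 2 * Real.exp ‖u‖) := by gcongr
    _ = (c * M : ℕ) * ‖u‖ ^ 2 * Real.exp ‖u‖ ^ (c * M) := by
        rw [← pow_sub_one_mul (by positivity : c * M ≠ 0) (Real.exp ‖u‖)]; ring
    _ = c * ‖z‖ ^ 2 * Real.exp (c * ‖z‖) / M := by
        rw [← Real.exp_nat_mul, hu]; push_cast; field_simp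

theorem norm_one_add_div_pow_le (c M : ℕ) (z : ℂ) :
    ‖(1 + z / M) ^ (c * M)‖ ≤ Real.exp (c * ‖z‖) := by
  rcases eq_or_ne M 0 with rfl | hM
  · simp [Real.one_le_exp (by positivity : (0 : ℝ) ≤ c * ‖z‖)]
  calc ‖(1 + z / M) ^ (c * M)‖ ≤ Real.exp ‖z / M‖ ^ (c * M) := by
        rw [norm_pow]; gcongr; exact norm_one_add_le_exp_norm _
    _ = Real.exp (c * ‖z‖) := by
        rw [← Real.exp_nat_mul]; congr 1; simp; field_simp

theorem tendstoUniformlyOn_one_add_div_pow_exp (c : ℕ) (S : ℝ) :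
    TendstoUniformlyOn (fun (M : ℕ) (z : ℂ) => (1 + z / M) ^ (c * M)) (fun z => exp (c * z))
      atTop (closedBall 0 S) := by
  refine tendstoUniformlyOn_of_norm_sub_le
    (tendsto_const_div_atTop_nhds_zero_nat (c * S ^ 2 * Real.exp (c * S))) ?_
  filter_upwards [eventually_ne_atTop 0] with M hM z hz
  rw [mem_closedBall_zero_iff] at hz
  refine (norm_one_add_div_pow_sub_exp_le c hM z).trans ?_
  gcongr

theorem tendstoUniformlyOn_pow_mul_one_add_div_pow_zero {ρ : ℂ} (hρ : ‖ρ‖ < 1) (c : ℕ)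
    (S : ℝ) :
    TendstoUniformlyOn (fun (M : ℕ) (z : ℂ) => ρ ^ M * (1 + z / M) ^ (c * M)) 0
      atTop (closedBall 0 S) := by
  have hb := (tendsto_pow_atTop_nhds_zero_of_lt_one (norm_nonneg ρ) hρ).const_mul
    (Real.exp (c * S))
  rw [mul_zero] at hb
  refine tendstoUniformlyOn_of_norm_sub_le hb (Eventually.of_forall fun M z hz => ?_)
  rw [mem_closedBall_zero_iff] at hz
  rw [Pi.zero_apply, sub_zero, norm_mul, norm_pow, mul_comm]
  gcongr
  exact (norm_one_add_div_pow_le c M z).trans (by gcongr)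

end Complex

theorem Nat.factorial_mul_pow_lt_factorial_mul_pow {m k : ℕ} (h₁ : k ≠ m) (h₂ : k ≠ m + 1) :
    m ! * (m + 1) ^ k < k ! * (m + 1) ^ m := by
  rcases lt_or_gt_of_ne h₁ with hlt | hgt
  · obtain ⟨j, rfl⟩ := Nat.exists_eq_add_of_lt hlt
    have hfac : (k + j + 1)! < k ! * (k + j + 1 + 1) ^ (j + 1) :=
      calc (k + j + 1)! = k ! * (k + 1).ascFactorial (j + 1) := by
            rw [Nat.factorial_mul_ascFactorial, Nat.add_assoc]
        _ ≤ k ! * (k + (j + 1)) ^ (j + 1) :=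
            Nat.mul_le_mul_left _ (Nat.ascFactorial_le_pow_add _ _)
        _ < k ! * (k + j + 1 + 1) ^ (j + 1) :=
            Nat.mul_lt_mul_of_pos_left (Nat.pow_lt_pow_left (by omega) (by omega)) k.factorial_pos
    calc (k + j + 1)! * (k + j + 1 + 1) ^ k
        < k ! * (k + j + 1 + 1) ^ (j + 1) * (k + j + 1 + 1) ^ k :=
          Nat.mul_lt_mul_of_pos_right hfac (by positivity)
      _ = k ! * (k + j + 1 + 1) ^ (k + j + 1) := by ring
  · obtain ⟨j, rfl⟩ := Nat.exists_eq_add_of_lt (show m + 1 < k by omega)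
    have hfac : (m + 1)! * (m + 1) ^ (j + 1) < (m + 1 + j + 1)! :=
      calc (m + 1)! * (m + 1) ^ (j + 1) < (m + 1)! * (m + 1 + 1) ^ (j + 1) :=
            Nat.mul_lt_mul_of_pos_left (Nat.pow_lt_pow_left (by omega) (by omega))
              (m + 1).factorial_pos
        _ ≤ (m + 1 + (j + 1))! := Nat.factorial_mul_pow_le_factorial
        _ = (m + 1 + j + 1)! := by rw [← Nat.add_assoc]
    calc m ! * (m + 1) ^ (m + 1 + j + 1) = (m + 1)! * (m + 1) ^ (j + 1) * (m + 1) ^ m := by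
          rw [Nat.factorial_succ]; ring
      _ < (m + 1 + j + 1)! * (m + 1) ^ m := Nat.mul_lt_mul_of_pos_right hfac (by positivity)

noncomputable section

variable (N ν : ℕ)

def Qcoeff (k : ℕ) : ℂ := N.choose k * (-1) ^ k / (N.choose (ν - 1) * (-1) ^ (ν - 1))

def Qratio (k : ℕ) : ℂ := ((ν : ℂ) ^ k / k !) / ((ν : ℂ) ^ (ν - 1) / (ν - 1)!)

def Qlimit (k : ℕ) (w : ℂ) : ℂ :=
  if k = ν - 1 ∨ k = ν then Qcoeff N ν k * Complex.exp (k * (w / ν)) else 0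

variable {N ν}

theorem Qpoly_div_eq_sum (hν : ν ≠ 0) (M : ℕ) (w : ℂ) :
    Qpoly N M ((ν : ℂ) + w / M) /
        ((N.choose (ν - 1) : ℂ) * (-1) ^ (ν - 1) * ((ν : ℂ) ^ (ν - 1) / (ν - 1)!) ^ M) =
      ∑ k ∈ range (N + 1), Qcoeff N ν k * Qratio ν k ^ M * (1 + w / ν / M) ^ (k * M) := by
  have hbase : (ν : ℂ) + w / M = ν * (1 + w / ν / M) := by field_simp
  rw [Qpoly, sum_div]
  refine sum_congr rfl fun k _ => ?_
  rw [hbase, mul_pow, Qcoeff, Qratio, div_pow, pow_mul]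
  simp only [div_eq_mul_inv, mul_pow, mul_inv, inv_pow, inv_inv]
  ring

theorem Qratio_sub_one : Qratio ν (ν - 1) = 1 := by
  refine div_self (div_ne_zero ?_ (Nat.cast_ne_zero.2 (Nat.factorial_ne_zero _)))
  rcases eq_or_ne ν 0 with rfl | h
  · simp
  · exact pow_ne_zero _ (Nat.cast_ne_zero.2 h)

theorem Qratio_self (hν : ν ≠ 0) : Qratio ν ν = 1 := by
  obtain ⟨m, rfl⟩ := Nat.exists_eq_add_one_of_ne_zero hν
  have hm! : (m ! : ℂ) ≠ 0 := Nat.cast_ne_zero.2 (Nat.factorial_ne_zero _)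
  simp only [Qratio, Nat.add_sub_cancel, Nat.factorial_succ]
  push_cast
  field_simp
  ring

theorem norm_Qratio_lt_one {k : ℕ} (hν : ν ≠ 0) (hk₁ : k ≠ ν - 1) (hk₂ : k ≠ ν) :
    ‖Qratio ν k‖ < 1 := by
  have hnorm : ‖Qratio ν k‖ = ((ν : ℝ) ^ k / k !) / ((ν : ℝ) ^ (ν - 1) / (ν - 1)!) := by
    simp only [Qratio, norm_div, norm_pow, Complex.norm_natCast]
  obtain ⟨m, rfl⟩ := Nat.exists_eq_add_one_of_ne_zero hν
  rw [Nat.add_sub_cancel] at hk₁ hnorm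
  have key : ((m ! * (m + 1) ^ k : ℕ) : ℝ) < (k ! * (m + 1) ^ m : ℕ) :=
    Nat.cast_lt.2 (Nat.factorial_mul_pow_lt_factorial_mul_pow hk₁ hk₂)
  push_cast at key hnorm
  rw [hnorm, div_lt_one (by positivity), div_lt_div_iff₀ (by positivity) (by positivity)]
  linarith

theorem Qcoeff_sub_one (h : ν - 1 ≤ N) : Qcoeff N ν (ν - 1) = 1 :=
  div_self (mul_ne_zero (Nat.cast_ne_zero.2 (Nat.choose_pos h).ne') (pow_ne_zero _ (by norm_num)))

theorem Qcoeff_self (hν : ν ≠ 0) (h : ν - 1 ≤ N) :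
    Qcoeff N ν ν = -((N + 1 - ν : ℕ) : ℂ) / ν := by
  obtain ⟨m, rfl⟩ := Nat.exists_eq_add_one_of_ne_zero hν
  rw [Nat.add_sub_cancel] at h
  have hc : (N.choose m : ℂ) ≠ 0 := Nat.cast_ne_zero.2 (Nat.choose_pos h).ne'
  have hpascal : (N.choose (m + 1) : ℂ) * (m + 1) = N.choose m * ((N - m : ℕ) : ℂ) := by
    exact_mod_cast Nat.choose_succ_right_eq N m
  rw [Qcoeff, Nat.add_sub_cancel, Nat.add_sub_add_right, pow_succ]
  push_cast
  field_simp
  linear_combination -hpascal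

theorem tendstoUniformlyOn_Qterm (hν : ν ≠ 0) (k : ℕ) (S : ℝ) :
    TendstoUniformlyOn
      (fun (M : ℕ) (w : ℂ) => Qcoeff N ν k * Qratio ν k ^ M * (1 + w / ν / M) ^ (k * M))
      (Qlimit N ν k) atTop (closedBall 0 S) := by
  have hdiv : Set.MapsTo (· / (ν : ℂ)) (closedBall 0 S) (closedBall 0 S) := fun w hw => by
    rw [mem_closedBall_zero_iff] at hw ⊢
    rw [norm_div, Complex.norm_natCast]
    exact (div_le_self (norm_nonneg w) (by exact_mod_cast Nat.one_le_iff_ne_zero.2 hν)).trans hw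
  by_cases hk : k = ν - 1 ∨ k = ν
  · have hρ : Qratio ν k = 1 := by
      rcases hk with rfl | rfl
      exacts [Qratio_sub_one, Qratio_self hν]
    have hlim : Qlimit N ν k = fun w => Qcoeff N ν k * Complex.exp (k * (w / ν)) :=
      funext fun w => if_pos hk
    simp only [hlim, hρ, one_pow, mul_one]
    exact TendstoUniformlyOn.const_mul
      (((Complex.tendstoUniformlyOn_one_add_div_pow_exp k S).comp _).mono hdiv) _
  · push Not at hk
    have hρ := norm_Qratio_lt_one hν hk.1 hk.2
    have hlim : Qlimit N ν k = fun _ => Qcoeff N ν k * 0 :=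
      funext fun w => (if_neg (by omega)).trans (mul_zero _).symm
    simp only [hlim, mul_assoc]
    exact TendstoUniformlyOn.const_mul
      (((Complex.tendstoUniformlyOn_pow_mul_one_add_div_pow_zero hρ k S).comp _).mono hdiv)
      (Qcoeff N ν k)

theorem sum_Qlimit (hν : ν ≠ 0) (hνN : ν ≤ N) (w : ℂ) :
    ∑ k ∈ range (N + 1), Qlimit N ν k w =
      Complex.exp (w * (1 - 1 / (ν : ℂ))) *
        (1 - ((N + 1 - ν : ℕ) : ℂ) / (ν : ℂ) * Complex.exp (w / (ν : ℂ))) := by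
  have hsupp : (range (N + 1)).filter (fun k => k = ν - 1 ∨ k = ν) = {ν - 1, ν} := by
    ext k; simp only [mem_filter, mem_range, mem_insert, mem_singleton]; omega
  simp only [Qlimit]
  rw [← sum_filter, hsupp, sum_pair (by omega), Qcoeff_sub_one (by omega),
    Qcoeff_self hν (by omega), Nat.cast_sub (by omega : 1 ≤ ν)]
  have hpred : ((ν : ℂ) - 1) * (w / ν) = w * (1 - 1 / ν) := by field_simp
  have hsplit : (ν : ℂ) * (w / ν) = w * (1 - 1 / ν) + w / ν := by field_simp; ring
  rw [Nat.cast_one, hpred, hsplit, Complex.exp_add]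
  ring

theorem tendstoUniformlyOn_Qpoly_div (hν : ν ≠ 0) (hνN : ν ≤ N) (S : ℝ) :
    TendstoUniformlyOn
      (fun (M : ℕ) (w : ℂ) => Qpoly N M ((ν : ℂ) + w / M) /
        ((N.choose (ν - 1) : ℂ) * (-1) ^ (ν - 1) * ((ν : ℂ) ^ (ν - 1) / (ν - 1)!) ^ M))
      (fun w => Complex.exp (w * (1 - 1 / (ν : ℂ))) *
        (1 - ((N + 1 - ν : ℕ) : ℂ) / (ν : ℂ) * Complex.exp (w / (ν : ℂ))))
      atTop (closedBall 0 S) := by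
  simp only [Qpoly_div_eq_sum hν, ← sum_Qlimit hν hνN]
  exact tendstoUniformlyOn_finset_sum _ fun k _ => tendstoUniformlyOn_Qterm hν k S

end

theorem Qpoly_local_limit_general
    (N ν : ℕ) (hν1 : 1 ≤ ν) (hνN : ν ≤ N)
    (𝒦 : Set ℂ) (h𝒦 : IsCompact 𝒦) (δ : ℝ) (hδ : 0 < δ) :
    ∃ M₀ : ℕ, ∀ M : ℕ, M₀ ≤ M → ∀ w ∈ 𝒦,
      ‖Qpoly N M ((ν : ℂ) + w / M) /
          ((N.choose (ν - 1) : ℂ) * (-1) ^ (ν - 1) *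
            ((ν : ℂ) ^ (ν - 1) / ((ν - 1).factorial : ℂ)) ^ M) -
        Complex.exp (w * (1 - 1 / (ν : ℂ))) *
          (1 - ((N + 1 - ν : ℕ) : ℂ) / (ν : ℂ) * Complex.exp (w / (ν : ℂ)))‖ ≤ δ := by
  obtain ⟨S, hS⟩ := h𝒦.isBounded.subset_closedBall 0
  have hunif := (tendstoUniformlyOn_Qpoly_div (by omega) hνN S).mono hS
  obtain ⟨M₀, hM₀⟩ := eventually_atTop.1 (Metric.tendstoUniformlyOn_iff.1 hunif δ hδ)
  refine ⟨M₀, fun M hM w hw => ?_⟩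
  rw [← dist_eq_norm, dist_comm]
  exact (hM₀ M hM w hw).le

/-- Uniformly on compact subsets of `ℂ`,
`Q_N^{(M)}(ν + w/M) / [C(N,ν−1)(−1)^{ν−1}(ν^{ν−1}/(ν−1)!)^M]` converges, as `M → ∞`, to
`e^{w(1−1/ν)} (1 − ((N+1−ν)/ν) e^{w/ν})`. -/
theorem Qpoly_local_limit
    (N ν : ℕ) (hN : 1 ≤ N) (hν1 : 1 ≤ ν) (hνN : ν ≤ N)
    (𝒦 : Set ℂ) (h𝒦 : IsCompact 𝒦) (δ : ℝ) (hδ : 0 < δ) :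
    ∃ M₀ : ℕ, ∀ M : ℕ, M₀ ≤ M → ∀ w ∈ 𝒦,
      ‖Qpoly N M ((ν : ℂ) + w / M) /
          ((N.choose (ν - 1) : ℂ) * (-1) ^ (ν - 1) *
            ((ν : ℂ) ^ (ν - 1) / ((ν - 1).factorial : ℂ)) ^ M) -
        Complex.exp (w * (1 - 1 / (ν : ℂ))) *
          (1 - ((N + 1 - ν : ℕ) : ℂ) / (ν : ℂ) * Complex.exp (w / (ν : ℂ)))‖ ≤ δ :=
  Qpoly_local_limit_general N ν hν1 hνN 𝒦 h𝒦 δ hδ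
end

section
/- Fix N ≥ 1 and ν ∈ {1,…,N}. Then there exists M_0 ≥ 1 and, for each M ≥ M_0, a real number u_M > 0 with Q_N^{(M)}(u_M) = 0, such that lim_{M→∞} M (u_M − ν) = ν log( ν / (N + 1 − ν) ). Equivalently, p_N^{(M)} has a positive real zero x_M = u_M^M satisfying lim_{M→∞} ( log x_M − M log ν ) = log( ν / (N + 1 − ν) ). -/
/-!
Write `ν = j + 1`. The numbers `νᵏ / k!` attain their maximum exactly at `k = j` and `k = j + 1`,
where they agree, and every other one is smaller by a factor at most `ν / (ν + 1)`. After raising to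
the power `M`, the sign-corrected sum `(-1)ʲ Q_N^{(M)}(u)` is therefore dominated by its terms
`k = j, j + 1`. At `u = ν exp ((L + t) / M)` with `L = log (ν / (N + 1 - ν))` these two terms add
up to `C(N, j) (1 - eᵗ) (uʲ / j!)ᴹ`, and the remaining terms are smaller by a factor
`O((ν / (ν + 1))ᴹ)`. So `Q_N^{(M)}` changes sign between `t = -δ_M` and `t = δ_M` for some
`δ_M = O((ν / (ν + 1))ᴹ)`, and the zero `u_M` found in between satisfies
`M log (u_M / ν) = L + o(1)`; both limits follow from this.
-/

open Filter Finset

open Topology Nat Real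

lemma pow_succ_div_factorial_succ_s10 (x : ℝ) (m : ℕ) :
    x ^ (m + 1) / (m + 1)! = x ^ m / m ! * (x / (m + 1)) := by
  rw [factorial_succ, pow_succ]
  push_cast
  field_simp

lemma pow_div_factorial_le_of_le {x : ℝ} {k m : ℕ} (hkm : k ≤ m) (hmx : (m : ℝ) ≤ x) :
    x ^ k / k ! ≤ x ^ m / m ! := by
  have hx : 0 ≤ x := m.cast_nonneg.trans hmx
  induction m, hkm using Nat.le_induction with
  | base => rfl
  | succ m _ ih =>
    push_cast at hmx
    rw [pow_succ_div_factorial_succ_s10]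
    have : 1 ≤ x / (m + 1) := by rw [one_le_div (by positivity)]; exact hmx
    calc x ^ k / k ! ≤ x ^ m / m ! := ih (by linarith)
      _ ≤ x ^ m / m ! * (x / (m + 1)) := le_mul_of_one_le_right (by positivity) this

lemma pow_div_factorial_le_of_ge {x : ℝ} (hx : 0 ≤ x) {k m : ℕ} (hmk : m ≤ k)
    (hxm : x ≤ m + 1) : x ^ k / k ! ≤ x ^ m / m ! := by
  induction k, hmk using Nat.le_induction with
  | base => rfl
  | succ k hmk ih =>
    rw [pow_succ_div_factorial_succ_s10]
    have : x / (k + 1) ≤ 1 := by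
      rw [div_le_one (by positivity)]
      exact hxm.trans (by exact_mod_cast Nat.succ_le_succ hmk)
    exact (mul_le_of_le_one_right (by positivity) this).trans ih

lemma pow_div_factorial_le_of_ne {j k : ℕ} (hkj : k ≠ j) (hkj' : k ≠ j + 1) :
    ((j + 1 : ℝ)) ^ k / k ! ≤ (j + 1) / (j + 2) * ((j + 1 : ℝ) ^ j / j !) := by
  rcases lt_or_gt_of_ne hkj with hk | hk
  · obtain ⟨i, rfl⟩ : ∃ i, j = i + 1 := ⟨j - 1, by omega⟩
    have hmono := pow_div_factorial_le_of_le (x := ((i + 1 : ℕ) + 1 : ℝ))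
      (Nat.le_of_lt_succ hk) (by push_cast; linarith)
    have hgap : (1 : ℝ) ≤ (i + 2) / (i + 1) * ((i + 2) / (i + 3)) := by
      field_simp
      nlinarith
    rw [pow_succ_div_factorial_succ_s10]
    push_cast at hmono ⊢
    refine hmono.trans (le_of_le_of_eq (le_mul_of_one_le_left (by positivity) hgap) ?_)
    ring_nf
  · have hmono := pow_div_factorial_le_of_ge (x := (j + 1 : ℝ)) (by positivity)
      (show j + 2 ≤ k by omega) (by push_cast; linarith)
    refine hmono.trans (le_of_eq ?_)
    rw [pow_succ_div_factorial_succ_s10, pow_succ_div_factorial_succ_s10]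
    push_cast
    field_simp
    ring

lemma mul_exp_pow_div_factorial_le {N j k : ℕ} (hj : j ≤ N) (hk : k ≤ N) (hkj : k ≠ j)
    (hkj' : k ≠ j + 1) (s : ℝ) :
    ((j + 1) * exp s) ^ k / k ! ≤
      (j + 1) / (j + 2) * exp (|s| * N) * (((j + 1) * exp s) ^ j / j !) := by
  have hkN : (k : ℝ) ≤ N := by exact_mod_cast hk
  have hjN : (j : ℝ) ≤ N := by exact_mod_cast hj
  have hdist : |(k : ℝ) - j| ≤ N :=
    abs_sub_le_iff.2 ⟨by linarith [j.cast_nonneg (α := ℝ)], by linarith [k.cast_nonneg (α := ℝ)]⟩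
  have hexp : exp (k * s) ≤ exp (|s| * N) * exp (j * s) := by
    rw [← exp_add, exp_le_exp]
    have : ((k : ℝ) - j) * s ≤ |s| * N := by
      calc ((k : ℝ) - j) * s ≤ |((k : ℝ) - j) * s| := le_abs_self _
        _ = |(k : ℝ) - j| * |s| := abs_mul _ _
        _ ≤ N * |s| := by gcongr
        _ = |s| * N := mul_comm _ _
    linarith
  calc ((j + 1) * exp s) ^ k / k ! = (j + 1 : ℝ) ^ k / k ! * exp (k * s) := by
        rw [mul_pow, exp_nat_mul]; ring
    _ ≤ (j + 1) / (j + 2) * ((j + 1 : ℝ) ^ j / j !) * (exp (|s| * N) * exp (j * s)) :=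
        mul_le_mul (pow_div_factorial_le_of_ne hkj hkj') hexp (by positivity) (by positivity)
    _ = (j + 1) / (j + 2) * exp (|s| * N) * (((j + 1) * exp s) ^ j / j !) := by
        rw [mul_pow, exp_nat_mul]; ring

lemma abs_sum_sub_sub_le {s : Finset ℕ} {g D : ℕ → ℝ} {i j : ℕ} (hi : i ∈ s) (hj : j ∈ s)
    (hij : i ≠ j) (hg : ∀ k ∈ s, k ≠ i → k ≠ j → |g k| ≤ D k) (hD : ∀ k ∈ s, 0 ≤ D k) :
    |∑ k ∈ s, g k - g i - g j| ≤ ∑ k ∈ s, D k := by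
  have hj' : j ∈ s.erase i := mem_erase.2 ⟨hij.symm, hj⟩
  rw [← add_sum_erase s g hi, ← add_sum_erase _ g hj', add_sub_cancel_left, add_sub_cancel_left]
  calc |∑ k ∈ (s.erase i).erase j, g k| ≤ ∑ k ∈ (s.erase i).erase j, |g k| := abs_sum_le_sum_abs _ _
    _ ≤ ∑ k ∈ (s.erase i).erase j, D k := sum_le_sum fun k hk => by
        obtain ⟨hkj, hki, hks⟩ : k ≠ j ∧ k ≠ i ∧ k ∈ s := by simpa using hk
        exact hg k hks hki hkj
    _ ≤ ∑ k ∈ s, D k := sum_le_sum_of_subset_of_nonneg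
        ((erase_subset _ _).trans (erase_subset _ _)) fun k hk _ => hD k hk

noncomputable def QpolyReal (N M : ℕ) (x : ℝ) : ℝ :=
  ∑ k ∈ range (N + 1), (N.choose k : ℝ) * (-1) ^ k * (x ^ k / k !) ^ M

lemma Qpoly_ofReal (N M : ℕ) (x : ℝ) : Qpoly N M x = QpolyReal N M x := by
  simp only [Qpoly, QpolyReal]
  push_cast
  rfl

@[fun_prop]
lemma continuous_QpolyReal (N M : ℕ) : Continuous (QpolyReal N M) := by
  unfold QpolyReal
  fun_prop

lemma abs_neg_one_pow_mul_QpolyReal_sub_le {N j : ℕ} (hj : j + 1 ≤ N) (M : ℕ) (s : ℝ) :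
    |(-1) ^ j * QpolyReal N M ((j + 1) * exp s) -
        (N.choose j * (((j + 1) * exp s) ^ j / j !) ^ M -
          N.choose (j + 1) * (((j + 1) * exp s) ^ (j + 1) / (j + 1)!) ^ M)| ≤
      2 ^ N * ((j + 1) / (j + 2) * exp (|s| * N)) ^ M * (((j + 1) * exp s) ^ j / j !) ^ M := by
  set u : ℝ := (j + 1) * exp s
  set D : ℝ := ((j + 1) / (j + 2) * exp (|s| * N) * (u ^ j / j !)) ^ M
  set g : ℕ → ℝ := fun k => (-1) ^ j * ((N.choose k : ℝ) * (-1) ^ k * (u ^ k / k !) ^ M)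
  have hsq : (-1 : ℝ) ^ j * (-1) ^ j = 1 := pow_mul_pow_eq_one j (by norm_num)
  have hsplit : (-1) ^ j * QpolyReal N M u -
      (N.choose j * (u ^ j / j !) ^ M - N.choose (j + 1) * (u ^ (j + 1) / (j + 1)!) ^ M) =
      ∑ k ∈ range (N + 1), g k - g j - g (j + 1) := by
    simp only [QpolyReal, mul_sum, g]
    linear_combination (N.choose j * (u ^ j / j !) ^ M -
      N.choose (j + 1) * (u ^ (j + 1) / (j + 1)!) ^ M) * hsq
  have hterm : ∀ k ∈ range (N + 1), k ≠ j → k ≠ j + 1 → |g k| ≤ N.choose k * D := by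
    intro k hk hkj hkj'
    have hkN : k ≤ N := Nat.lt_succ_iff.1 (mem_range.1 hk)
    have hgk : |g k| = N.choose k * (u ^ k / k !) ^ M := by
      simp only [g, abs_mul, abs_pow, abs_neg, abs_one, one_pow, one_mul, mul_one, Nat.abs_cast]
      rw [abs_of_nonneg (by positivity)]
    rw [hgk]
    gcongr
    exact pow_le_pow_left₀ (by positivity)
      (mul_exp_pow_div_factorial_le (by omega) hkN hkj hkj' s) M
  calc _ = |∑ k ∈ range (N + 1), g k - g j - g (j + 1)| := by rw [hsplit]
    _ ≤ ∑ k ∈ range (N + 1), (N.choose k : ℝ) * D :=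
        abs_sum_sub_sub_le (mem_range.2 (by omega)) (mem_range.2 (by omega)) (by omega) hterm
          fun k _ => by positivity
    _ = 2 ^ N * D := by
        rw [← sum_mul]
        congr
        exact_mod_cast Nat.sum_range_choose N
    _ = _ := by simp only [D, mul_pow (_ * _), mul_assoc]

lemma choose_succ_mul_pow_div_factorial_eq {N j M : ℕ} (hj : j + 1 ≤ N) (hM : M ≠ 0) {L : ℝ}
    (hL : exp L = (j + 1) / (N - j)) (t : ℝ) :
    N.choose (j + 1) * (((j + 1) * exp ((L + t) / M)) ^ (j + 1) / (j + 1)!) ^ M =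
      N.choose j * exp t * (((j + 1) * exp ((L + t) / M)) ^ j / j !) ^ M := by
  have hNj : (0 : ℝ) < N - j := by
    rw [sub_pos]; exact_mod_cast (show j < N by omega)
  have hchoose : (N.choose (j + 1) : ℝ) * ((j + 1) / (N - j)) = N.choose j := by
    have h : ((N.choose (j + 1) * (j + 1) : ℕ) : ℝ) = ((N.choose j * (N - j) : ℕ) : ℝ) := by
      rw [Nat.choose_succ_right_eq]
    push_cast [Nat.cast_sub (show j ≤ N by omega)] at h
    rw [mul_div_assoc', h]
    field_simp
  have hexp : exp ((L + t) / M) ^ M = exp L * exp t := by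
    rw [← exp_nat_mul, mul_div_cancel₀ _ (by exact_mod_cast hM), exp_add]
  rw [pow_succ_div_factorial_succ_s10, mul_pow, mul_div_cancel_left₀ _ (by positivity), hexp, hL]
  linear_combination (((j + 1) * exp ((L + t) / M)) ^ j / j !) ^ M * exp t * hchoose

lemma abs_neg_one_pow_mul_QpolyReal_exp_sub_le {N j M : ℕ} (hj : j + 1 ≤ N) (hM : M ≠ 0)
    {L t : ℝ} (hL : exp L = (j + 1) / (N - j)) (ht : |t| ≤ 1) :
    |(-1) ^ j * QpolyReal N M ((j + 1) * exp ((L + t) / M)) -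
        N.choose j * (1 - exp t) * (((j + 1) * exp ((L + t) / M)) ^ j / j !) ^ M| ≤
      2 ^ N * exp ((|L| + 1) * N) * ((j + 1) / (j + 2)) ^ M *
        (((j + 1) * exp ((L + t) / M)) ^ j / j !) ^ M := by
  have hsM : |(L + t) / M| * M ≤ |L| + 1 := by
    rw [abs_div, Nat.abs_cast, div_mul_cancel₀ _ (by exact_mod_cast hM)]
    exact (abs_add_le L t).trans (by linarith)
  have h := abs_neg_one_pow_mul_QpolyReal_sub_le hj M ((L + t) / M)
  rw [choose_succ_mul_pow_div_factorial_eq hj hM hL] at h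
  refine (congrArg abs (by ring)).trans_le (h.trans ?_)
  rw [mul_pow (_ / _ : ℝ), ← exp_nat_mul]
  calc _ ≤ 2 ^ N * (((j + 1) / (j + 2)) ^ M * exp ((|L| + 1) * N)) *
          (((j + 1) * exp ((L + t) / M)) ^ j / j !) ^ M := by
        gcongr 2 ^ N * (_ * exp ?_) * _
        nlinarith [abs_nonneg ((L + t) / M), N.cast_nonneg (α := ℝ)]
    _ = _ := by ring

lemma exists_QpolyReal_exp_eq_zero {N j M : ℕ} (hj : j + 1 ≤ N) (hM : M ≠ 0) {L δ : ℝ}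
    (hL : exp L = (j + 1) / (N - j)) (hδ : 0 < δ) (hδ' : δ ≤ 1 / 2)
    (hsmall : 2 ^ N * exp ((|L| + 1) * N) * ((j + 1) / (j + 2)) ^ M ≤ δ / 4) :
    ∃ t ∈ Set.Icc (-δ) δ, QpolyReal N M ((j + 1) * exp ((L + t) / M)) = 0 := by
  set f : ℝ → ℝ := fun t => (-1) ^ j * QpolyReal N M ((j + 1) * exp ((L + t) / M))
  set A : ℝ → ℝ := fun t => (((j + 1) * exp ((L + t) / M)) ^ j / j !) ^ M
  have hC : (1 : ℝ) ≤ N.choose j := by exact_mod_cast Nat.choose_pos (by omega)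
  have hf : ∀ t, |t| ≤ 1 → |f t - N.choose j * (1 - exp t) * A t| ≤ δ / 4 * A t := fun t ht =>
    (abs_neg_one_pow_mul_QpolyReal_exp_sub_le hj hM hL ht).trans
      (mul_le_mul_of_nonneg_right hsmall (by positivity))
  have hδ1 : |δ| ≤ 1 := by rw [abs_of_pos hδ]; linarith
  have hleft : 0 < f (-δ) := by
    have h1 := (abs_le.1 (hf (-δ) (by rwa [abs_neg]))).1
    have h2 : δ / 2 ≤ 1 - exp (-δ) := by
      have := abs_exp_sub_one_sub_id_le (x := -δ) (by rwa [abs_neg])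
      nlinarith [(abs_le.1 this).2]
    have h3 : δ / 2 * A (-δ) ≤ N.choose j * (1 - exp (-δ)) * A (-δ) := by
      gcongr
      nlinarith
    nlinarith [show 0 < A (-δ) by positivity]
  have hright : f δ < 0 := by
    have h1 := (abs_le.1 (hf δ hδ1)).2
    have h2 : δ ≤ exp δ - 1 := by linarith [add_one_le_exp δ]
    have h3 : δ * A δ ≤ N.choose j * (exp δ - 1) * A δ := by
      gcongr
      nlinarith
    nlinarith [show 0 < A δ by positivity]
  obtain ⟨t, ht, hft⟩ := intermediate_value_Icc' (f := f) (show -δ ≤ δ by linarith)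
    (by fun_prop : Continuous f).continuousOn ⟨hright.le, hleft.le⟩
  exact ⟨t, ht, (mul_eq_zero.1 hft).resolve_left (pow_ne_zero _ (by norm_num))⟩

lemma tendsto_nat_mul_exp_div_sub_one {y : ℕ → ℝ} {L : ℝ} (hy : Tendsto y atTop (𝓝 L)) :
    Tendsto (fun M : ℕ => M * (exp (y M / M) - 1)) atTop (𝓝 L) := by
  have hsq : Tendsto (fun M : ℕ => y M ^ 2 / M) atTop (𝓝 0) :=
    (hy.pow 2).div_atTop tendsto_natCast_atTop_atTop
  have hsmall : ∀ᶠ M : ℕ in atTop, |y M / M| ≤ 1 :=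
    (hy.div_atTop tendsto_natCast_atTop_atTop).abs.eventually (eventually_le_nhds (by simp))
  have herr : Tendsto (fun M : ℕ => M * (exp (y M / M) - 1) - y M) atTop (𝓝 0) := by
    refine squeeze_zero_norm' ?_ hsq
    filter_upwards [hsmall, eventually_ne_atTop 0] with M hM hM0
    have hM0' : (0 : ℝ) < M := by positivity
    calc ‖M * (exp (y M / M) - 1) - y M‖ = M * |exp (y M / M) - 1 - y M / M| := by
          rw [Real.norm_eq_abs, ← abs_of_pos hM0', ← abs_mul, abs_of_pos hM0']
          congr 1
          field_simp
      _ ≤ M * (y M / M) ^ 2 := by gcongr; exact abs_exp_sub_one_sub_id_le hM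
      _ = y M ^ 2 / M := by field_simp
  simpa using herr.add hy

lemma exists_tendsto_QpolyReal_eq_zero {N ν : ℕ} (hν : 1 ≤ ν) (hνN : ν ≤ N) :
    ∃ y : ℕ → ℝ, Tendsto y atTop (𝓝 (log (ν / (N + 1 - ν)))) ∧
      ∀ᶠ M in atTop, QpolyReal N M (ν * exp (y M / M)) = 0 := by
  obtain ⟨j, rfl⟩ : ∃ j, ν = j + 1 := ⟨ν - 1, by omega⟩
  set L := log (((j + 1 : ℕ) : ℝ) / (N + 1 - (j + 1 : ℕ)))
  have hL : exp L = (j + 1) / (N - j) := by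
    have hden : (N : ℝ) + 1 - (j + 1 : ℕ) = N - j := by push_cast; ring
    have hNj : (0 : ℝ) < N - j := by
      rw [sub_pos]; exact_mod_cast (show j < N by omega)
    rw [exp_log (div_pos (by positivity) (hden ▸ hNj)), hden]
    push_cast
    rfl
  set δ : ℕ → ℝ := fun M => 4 * (2 ^ N * exp ((|L| + 1) * N) * ((j + 1) / (j + 2)) ^ M)
  have hδ : Tendsto δ atTop (𝓝 0) := by
    simpa [δ] using ((tendsto_pow_atTop_nhds_zero_of_lt_one (by positivity)
      (show ((j : ℝ) + 1) / (j + 2) < 1 by rw [div_lt_one (by positivity)]; linarith)).const_mul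
        (2 ^ N * exp ((|L| + 1) * N))).const_mul 4
  have hgood : ∀ M, ∃ t, |t| ≤ δ M ∧
      (M ≠ 0 ∧ δ M ≤ 1 / 2 → QpolyReal N M ((j + 1) * exp ((L + t) / M)) = 0) := by
    intro M
    by_cases hM : M ≠ 0 ∧ δ M ≤ 1 / 2
    · obtain ⟨t, ht, h0⟩ := exists_QpolyReal_exp_eq_zero (by omega) hM.1 hL (by positivity)
        hM.2 (by simp only [δ]; linarith)
      exact ⟨t, abs_le.2 ht, fun _ => h0⟩
    · exact ⟨0, by simp only [abs_zero, δ]; positivity, fun h => absurd h hM⟩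
  choose t ht using hgood
  have htend : Tendsto t atTop (𝓝 0) := squeeze_zero_norm (fun M => (ht M).1) hδ
  refine ⟨fun M => L + t M, by simpa using tendsto_const_nhds.add htend, ?_⟩
  filter_upwards [eventually_ne_atTop 0,
    hδ.eventually (eventually_le_nhds (by norm_num : (0 : ℝ) < 1 / 2))] with M hM hδM
  push_cast
  exact (ht M).2 ⟨hM, hδM⟩

theorem Qpoly_positive_zero_near_nu_general
    (N ν : ℕ) (hν1 : 1 ≤ ν) (hνN : ν ≤ N) :
    ∃ M₀ : ℕ, 1 ≤ M₀ ∧ ∃ u : ℕ → ℝ,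
      (∀ M : ℕ, M₀ ≤ M → 0 < u M ∧ Qpoly N M ((u M : ℝ) : ℂ) = 0) ∧
      Tendsto (fun M : ℕ => (M : ℝ) * (u M - ν)) atTop
        (nhds ((ν : ℝ) * Real.log ((ν : ℝ) / ((N : ℝ) + 1 - ν)))) ∧
      Tendsto (fun M : ℕ => Real.log ((u M) ^ M) - (M : ℝ) * Real.log (ν : ℝ)) atTop
        (nhds (Real.log ((ν : ℝ) / ((N : ℝ) + 1 - ν)))) := by
  obtain ⟨y, hy, hzero⟩ := exists_tendsto_QpolyReal_eq_zero hν1 hνN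
  obtain ⟨M₀, hM₀⟩ := eventually_atTop.1 hzero
  have hν : (0 : ℝ) < ν := by exact_mod_cast hν1
  refine ⟨max M₀ 1, le_max_right _ _, fun M => ν * exp (y M / M),
    fun M hM => ⟨by positivity, ?_⟩, ?_, ?_⟩
  · rw [Qpoly_ofReal, hM₀ M (le_of_max_le_left hM), Complex.ofReal_zero]
  · refine ((tendsto_nat_mul_exp_div_sub_one hy).const_mul (ν : ℝ)).congr fun M => ?_
    ring
  · refine hy.congr' ?_
    filter_upwards [eventually_ne_atTop 0] with M hM
    rw [Real.log_pow, log_mul hν.ne' (exp_pos _).ne', log_exp]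
    field_simp
    ring

/-- For large `M`, `Q_N^{(M)}` has a positive real zero `u_M` near `ν` with
`M (u_M − ν) → ν log(ν/(N+1−ν))`; equivalently `p_N^{(M)}` has a positive zero `x_M = u_M^M`
with `log x_M − M log ν → log(ν/(N+1−ν))`. -/
theorem Qpoly_positive_zero_near_nu
    (N ν : ℕ) (hN : 1 ≤ N) (hν1 : 1 ≤ ν) (hνN : ν ≤ N) :
    ∃ M₀ : ℕ, 1 ≤ M₀ ∧ ∃ u : ℕ → ℝ,
      (∀ M : ℕ, M₀ ≤ M → 0 < u M ∧ Qpoly N M ((u M : ℝ) : ℂ) = 0) ∧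
      Tendsto (fun M : ℕ => (M : ℝ) * (u M - ν)) atTop
        (nhds ((ν : ℝ) * Real.log ((ν : ℝ) / ((N : ℝ) + 1 - ν)))) ∧
      Tendsto (fun M : ℕ => Real.log ((u M) ^ M) - (M : ℝ) * Real.log (ν : ℝ)) atTop
        (nhds (Real.log ((ν : ℝ) / ((N : ℝ) + 1 - ν)))) :=
  Qpoly_positive_zero_near_nu_general N ν hν1 hνN
end

section
/- Fix N ≥ 1 and ε > 0. Then for every M ≥ 1 and every u ∈ ℂ with |u| ≥ N + ε: | Q_N^{(M)}(u) / [ (−1)^N (u^N/N!)^M ] − 1 | ≤ Σ_{k=0}^{N−1} binom(N,k) ( N/(N+ε) )^M. -/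
/-!
After division by the leading term, the `k`-th term has modulus
`C(N,k) (N!/(k! |u|^(N-k)))^M`, and `N!/k! ≤ N^(N-k)` bounds the ratio by
`(N/|u|)^(N-k) ≤ N/(N+ε)`.
-/

open Finset

open Nat in
theorem Nat.factorial_le_factorial_mul_pow_sub {k n : ℕ} (hk : k ≤ n) :
    n ! ≤ k ! * n ^ (n - k) := by
  calc n ! = (n - (n - k))! * n.descFactorial (n - k) :=
        (factorial_mul_descFactorial (sub_le n k)).symm
    _ = k ! * n.descFactorial (n - k) := by rw [Nat.sub_sub_self hk]
    _ ≤ k ! * n ^ (n - k) := Nat.mul_le_mul_left _ (descFactorial_le_pow n _)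

theorem norm_Qpoly_div_leading_sub_one_le (N M : ℕ) {u : ℂ} (hu : u ≠ 0) :
    ‖Qpoly N M u / ((-1 : ℂ) ^ N * (u ^ N / (N.factorial : ℂ)) ^ M) - 1‖
      ≤ ∑ k ∈ range N, (N.choose k : ℝ) *
          ‖(u ^ k / (k.factorial : ℂ)) / (u ^ N / (N.factorial : ℂ))‖ ^ M := by
  set L : ℂ := (-1 : ℂ) ^ N * (u ^ N / (N.factorial : ℂ)) ^ M
  have hL : L ≠ 0 := by
    have : (N.factorial : ℂ) ≠ 0 := by exact_mod_cast N.factorial_ne_zero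
    simp [L, hu, this]
  have hsplit : Qpoly N M u / L - 1 = ∑ k ∈ range N,
      (N.choose k : ℂ) * (-1) ^ k * (u ^ k / (k.factorial : ℂ)) ^ M / L := by
    rw [Qpoly, sum_range_succ, Nat.choose_self, Nat.cast_one, one_mul, add_div, div_self hL,
      add_sub_cancel_right, sum_div]
  rw [hsplit]
  refine (norm_sum_le _ _).trans (sum_le_sum fun k _ => le_of_eq ?_)
  simp [L, div_pow, mul_div_assoc]

theorem norm_monomial_div_monomial_le {k n : ℕ} (hk : k < n) {u : ℂ} {c : ℝ}
    (hnc : (n : ℝ) ≤ c) (hcu : c ≤ ‖u‖) :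
    ‖(u ^ k / (k.factorial : ℂ)) / (u ^ n / (n.factorial : ℂ))‖ ≤ n / c := by
  have hc : 0 < c := lt_of_lt_of_le (by exact_mod_cast Nat.zero_lt_of_lt hk) hnc
  have hu : 0 < ‖u‖ := hc.trans_le hcu
  have hk! : (0 : ℝ) < k.factorial := by positivity
  have hfact : (n.factorial : ℝ) / k.factorial ≤ (n : ℝ) ^ (n - k) := by
    rw [div_le_iff₀ hk!, mul_comm]
    exact_mod_cast Nat.factorial_le_factorial_mul_pow_sub hk.le
  have hnorm : ‖(u ^ k / (k.factorial : ℂ)) / (u ^ n / (n.factorial : ℂ))‖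
      = (n.factorial : ℝ) / k.factorial / ‖u‖ ^ (n - k) := by
    rw [norm_div, norm_div, norm_div, norm_pow, norm_pow, Complex.norm_natCast,
      Complex.norm_natCast, ← Nat.add_sub_cancel' hk.le, pow_add, Nat.add_sub_cancel_left]
    field_simp
  have hnc1 : (n : ℝ) / c ≤ 1 := (div_le_one hc).mpr hnc
  calc ‖(u ^ k / (k.factorial : ℂ)) / (u ^ n / (n.factorial : ℂ))‖
      = (n.factorial : ℝ) / k.factorial / ‖u‖ ^ (n - k) := hnorm
    _ ≤ (n : ℝ) ^ (n - k) / c ^ (n - k) :=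
        div_le_div₀ (by positivity) hfact (by positivity) (pow_le_pow_left₀ hc.le hcu _)
    _ = ((n : ℝ) / c) ^ (n - k) := (div_pow _ _ _).symm
    _ ≤ ((n : ℝ) / c) ^ 1 := pow_le_pow_of_le_one (by positivity) hnc1 (by omega)
    _ = n / c := pow_one _

theorem Qpoly_estimate_outer_region_general
    (N : ℕ) (ε : ℝ) (hε : 0 < ε) :
    ∀ M : ℕ, 1 ≤ M → ∀ u : ℂ, (N : ℝ) + ε ≤ ‖u‖ →
      ‖Qpoly N M u / ((-1 : ℂ) ^ N * (u ^ N / (N.factorial : ℂ)) ^ M) - 1‖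
        ≤ ∑ k ∈ Finset.range N, (N.choose k : ℝ) * ((N : ℝ) / ((N : ℝ) + ε)) ^ M := by
  intro M _ u hu
  have hNε : (N : ℝ) ≤ N + ε := by linarith
  have hu0 : u ≠ 0 := norm_pos_iff.mp ((by positivity : (0 : ℝ) < N + ε).trans_le hu)
  refine (norm_Qpoly_div_leading_sub_one_le N M hu0).trans (sum_le_sum fun k hk => ?_)
  gcongr
  exact norm_monomial_div_monomial_le (mem_range.mp hk) hNε hu

/-- **Estimate in the region `|u| ≥ N + ε`:** for every `M ≥ 1` and `|u| ≥ N + ε`,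
`|Q_N^{(M)}(u)/((−1)^N (u^N/N!)^M) − 1| ≤ Σ_{k=0}^{N−1} C(N,k) (N/(N+ε))^M`. -/
theorem Qpoly_estimate_outer_region
    (N : ℕ) (hN : 1 ≤ N) (ε : ℝ) (hε : 0 < ε) :
    ∀ M : ℕ, 1 ≤ M → ∀ u : ℂ, (N : ℝ) + ε ≤ ‖u‖ →
      ‖Qpoly N M u / ((-1 : ℂ) ^ N * (u ^ N / (N.factorial : ℂ)) ^ M) - 1‖
        ≤ ∑ k ∈ Finset.range N, (N.choose k : ℝ) * ((N : ℝ) / ((N : ℝ) + ε)) ^ M :=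
  Qpoly_estimate_outer_region_general N ε hε
end

section
/- Fix N ≥ 2, 0 < ε < 1/2, and ν ∈ {1,…,N−1}. Then for every M ≥ 1, every u ∈ ℂ with ν + ε ≤ |u| ≤ ν + 1 − ε, and every k ∈ {0,…,N} with k ≠ ν: binom(N,k) (|u|^k/k!)^M / [ binom(N,ν) (|u|^ν/ν!)^M ] ≤ ( (N−ν)! ν! / ((N−k)! k!) ) · ( N/(N+ε) )^M. Consequently, | Q_N^{(M)}(u) / [ binom(N,ν)(−1)^ν (u^ν/ν!)^M ] − 1 | ≤ Σ_{k=0, k≠ν}^{N} ( (N−ν)! ν! / ((N−k)! k!) ) ( N/(N+ε) )^M. -/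
/-! The sequence `x ^ j / j!` grows while `j < x` and decays once `j ≥ x`, so in the annulus
`ν + ε ≤ x ≤ ν + 1 − ε` its largest term is the `ν`-th one. Each neighbour of that term is smaller
by a factor `ν / x ≤ ν / (ν + ε)` or `x / (ν + 1) ≤ (ν + 1 − ε) / (ν + 1)`, and both are at most
`N / (N + ε)` because `ν ≤ N`, resp. `ν < k ≤ N`. Raising to the `M`-th power and rewriting the binomial quotient
`C(N,k) / C(N,ν)` with factorials gives the term-by-term bound; the bound on `Q_N^{(M)}` is the
triangle inequality for the sum of the quotients of the other terms by the dominant one. -/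

open Finset

namespace Real

theorem pow_succ_div_factorial_succ (x : ℝ) (j : ℕ) :
    x ^ (j + 1) / (j + 1).factorial = x ^ j / j.factorial * (x / (j + 1)) := by
  rw [Nat.factorial_succ, pow_succ]
  push_cast
  field_simp

theorem pow_div_factorial_le_of_le {x : ℝ} (hx : 0 ≤ x) {i j : ℕ} (hij : i ≤ j) (hj : (j : ℝ) ≤ x) :
    x ^ i / i.factorial ≤ x ^ j / j.factorial := by
  induction j, hij using Nat.le_induction with
  | base => rfl
  | succ j hij ih =>
    push_cast at hj
    rw [pow_succ_div_factorial_succ]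
    have hj' : (1 : ℝ) ≤ x / (j + 1) := (one_le_div (by positivity)).2 hj
    exact (ih (by linarith)).trans (le_mul_of_one_le_right (by positivity) hj')

theorem pow_div_factorial_le_of_ge {x : ℝ} (hx : 0 ≤ x) {i j : ℕ} (hij : i ≤ j) (hi : x ≤ i + 1) :
    x ^ j / j.factorial ≤ x ^ i / i.factorial := by
  induction j, hij using Nat.le_induction with
  | base => rfl
  | succ j hij ih =>
    rw [pow_succ_div_factorial_succ]
    have hj : x / (j + 1) ≤ 1 :=
      (div_le_one (by positivity)).2 (hi.trans (by exact_mod_cast Nat.succ_le_succ hij))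
    exact (mul_le_of_le_one_right (by positivity) hj).trans ih

theorem pow_div_factorial_le_of_lt {x : ℝ} {k n : ℕ} (hkn : k < n) (hn : (n : ℝ) ≤ x) :
    x ^ k / k.factorial ≤ n / x * (x ^ n / n.factorial) := by
  obtain ⟨m, rfl⟩ : ∃ m, n = m + 1 := ⟨n - 1, by omega⟩
  push_cast at hn
  have hx : 0 < x := by linarith [m.cast_nonneg (α := ℝ)]
  calc x ^ k / k.factorial ≤ x ^ m / m.factorial :=
        pow_div_factorial_le_of_le hx.le (by omega) (by linarith)
    _ = (m + 1 : ℕ) / x * (x ^ m / m.factorial * (x / (m + 1))) := by push_cast; field_simp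
    _ = (m + 1 : ℕ) / x * (x ^ (m + 1) / (m + 1).factorial) := by
        rw [pow_succ_div_factorial_succ]

theorem pow_div_factorial_le_of_gt {x : ℝ} (hx : 0 ≤ x) {k n : ℕ} (hnk : n < k)
    (hn : x ≤ n + 1) : x ^ k / k.factorial ≤ x / (n + 1) * (x ^ n / n.factorial) := by
  rw [mul_comm, ← pow_succ_div_factorial_succ]
  exact pow_div_factorial_le_of_ge hx hnk (by push_cast; linarith)

theorem pow_div_factorial_le_of_mem_annulus {N ν k : ℕ} {ε x : ℝ} (hε : 0 < ε) (hk : k ≤ N)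
    (hν : ν ≤ N) (hkν : k ≠ ν) (hx₁ : ν + ε ≤ x) (hx₂ : x ≤ ν + 1 - ε) :
    x ^ k / k.factorial ≤ N / (N + ε) * (x ^ ν / ν.factorial) := by
  have hx : 0 < x := by linarith [ν.cast_nonneg (α := ℝ)]
  have hpow : 0 ≤ x ^ ν / ν.factorial := by positivity
  rcases hkν.lt_or_gt with hkν | hνk
  · have hνN : (ν : ℝ) ≤ N := by exact_mod_cast hν
    refine (pow_div_factorial_le_of_lt hkν (by linarith)).trans
      (mul_le_mul_of_nonneg_right ?_ hpow)
    rw [div_le_div_iff₀ hx (by linarith)]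
    nlinarith
  · have hνN : (ν : ℝ) + 1 ≤ N := by exact_mod_cast hνk.trans_le hk
    refine (pow_div_factorial_le_of_gt hx.le hνk (by linarith)).trans
      (mul_le_mul_of_nonneg_right ?_ hpow)
    rw [div_le_div_iff₀ (by linarith) (by linarith)]
    nlinarith

end Real

theorem Nat.cast_choose_div_cast_choose {N k ν : ℕ} (hk : k ≤ N) (hν : ν ≤ N) :
    (N.choose k : ℝ) / N.choose ν =
      (((N - ν).factorial * ν.factorial : ℕ) : ℝ) / (((N - k).factorial * k.factorial : ℕ) : ℝ) := by
  rw [Nat.cast_choose ℝ hk, Nat.cast_choose ℝ hν]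
  push_cast
  field_simp

theorem choose_mul_pow_div_factorial_div_le_of_mem_annulus {N ν k : ℕ} (M : ℕ) {ε x : ℝ}
    (hε : 0 < ε) (hk : k ≤ N) (hν : ν ≤ N) (hkν : k ≠ ν) (hx₁ : ν + ε ≤ x)
    (hx₂ : x ≤ ν + 1 - ε) :
    (N.choose k : ℝ) * (x ^ k / k.factorial) ^ M / ((N.choose ν : ℝ) * (x ^ ν / ν.factorial) ^ M)
      ≤ (((N - ν).factorial * ν.factorial : ℕ) : ℝ) /
          (((N - k).factorial * k.factorial : ℕ) : ℝ) * ((N : ℝ) / ((N : ℝ) + ε)) ^ M := by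
  have hx : 0 < x := by linarith [ν.cast_nonneg (α := ℝ)]
  rw [mul_div_mul_comm, Nat.cast_choose_div_cast_choose hk hν, ← div_pow]
  refine mul_le_mul_of_nonneg_left (pow_le_pow_left₀ (by positivity) ?_ M) (by positivity)
  rw [div_le_iff₀ (by positivity)]
  exact Real.pow_div_factorial_le_of_mem_annulus hε hk hν hkν hx₁ hx₂

theorem norm_sum_div_sub_one_le {𝕜 ι : Type*} [NormedField 𝕜] [DecidableEq ι] {s : Finset ι}
    {f : ι → 𝕜} {i : ι} (hi : i ∈ s) (hfi : f i ≠ 0) :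
    ‖(∑ k ∈ s, f k) / f i - 1‖ ≤ ∑ k ∈ s.erase i, ‖f k‖ / ‖f i‖ := by
  rw [← Finset.add_sum_erase s f hi, add_div, div_self hfi, add_sub_cancel_left, Finset.sum_div]
  simpa only [norm_div] using norm_sum_le (s.erase i) (fun k => f k / f i)

theorem norm_choose_mul_neg_one_pow_mul_pow_div_factorial (N M k : ℕ) (u : ℂ) :
    ‖(N.choose k : ℂ) * (-1) ^ k * (u ^ k / (k.factorial : ℂ)) ^ M‖ =
      N.choose k * (‖u‖ ^ k / k.factorial) ^ M := by
  simp

theorem Qpoly_estimate_annulus_general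
    (N ν : ℕ) (ε : ℝ) (hε : 0 < ε)
    (hνN : ν ≤ N - 1) :
    ∀ M : ℕ, 1 ≤ M → ∀ u : ℂ,
      (ν : ℝ) + ε ≤ ‖u‖ → ‖u‖ ≤ (ν : ℝ) + 1 - ε →
      (∀ k : ℕ, k ≤ N → k ≠ ν →
        (N.choose k : ℝ) * ((‖u‖) ^ k / k.factorial) ^ M /
            ((N.choose ν : ℝ) * ((‖u‖) ^ ν / ν.factorial) ^ M)
          ≤ (((N - ν).factorial * ν.factorial : ℕ) : ℝ) /
              (((N - k).factorial * k.factorial : ℕ) : ℝ) * ((N : ℝ) / ((N : ℝ) + ε)) ^ M) ∧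
      ‖Qpoly N M u / ((N.choose ν : ℂ) * (-1) ^ ν * (u ^ ν / (ν.factorial : ℂ)) ^ M) - 1‖
        ≤ ∑ k ∈ (Finset.range (N + 1)).erase ν,
            (((N - ν).factorial * ν.factorial : ℕ) : ℝ) /
              (((N - k).factorial * k.factorial : ℕ) : ℝ) * ((N : ℝ) / ((N : ℝ) + ε)) ^ M := by
  intro M _ u hu₁ hu₂
  have hνN' : ν ≤ N := by omega
  have hu : 0 < ‖u‖ := by linarith [ν.cast_nonneg (α := ℝ)]
  have hdom : 0 < (N.choose ν : ℝ) * (‖u‖ ^ ν / ν.factorial) ^ M := by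
    have := Nat.choose_pos hνN'
    positivity
  have hterm := fun k (hk : k ≤ N) (hkν : k ≠ ν) =>
    choose_mul_pow_div_factorial_div_le_of_mem_annulus M hε hk hνN' hkν hu₁ hu₂
  refine ⟨hterm, ?_⟩
  have hνmem : ν ∈ Finset.range (N + 1) := Finset.mem_range.2 (by omega)
  refine (norm_sum_div_sub_one_le hνmem ?_).trans (Finset.sum_le_sum fun k hk => ?_)
  · rw [← norm_ne_zero_iff, norm_choose_mul_neg_one_pow_mul_pow_div_factorial]
    exact hdom.ne'
  · obtain ⟨hkν, hk⟩ := Finset.mem_erase.1 hk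
    simp only [norm_choose_mul_neg_one_pow_mul_pow_div_factorial]
    exact hterm k (Finset.mem_range_succ_iff.1 hk) hkν

/-- **Estimates in the annulus `ν + ε ≤ |u| ≤ ν + 1 − ε`** (for `1 ≤ ν ≤ N − 1`): term-by-term,
`C(N,k)(|u|^k/k!)^M / (C(N,ν)(|u|^ν/ν!)^M) ≤ ((N−ν)! ν!/((N−k)! k!)) (N/(N+ε))^M` for `k ≠ ν`,
and consequently
`|Q_N^{(M)}(u)/(C(N,ν)(−1)^ν (u^ν/ν!)^M) − 1| ≤ Σ_{k≠ν} ((N−ν)! ν!/((N−k)! k!)) (N/(N+ε))^M`. -/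
theorem Qpoly_estimate_annulus
    (N ν : ℕ) (hN : 2 ≤ N) (ε : ℝ) (hε : 0 < ε) (hε' : ε < 1 / 2)
    (hν1 : 1 ≤ ν) (hνN : ν ≤ N - 1) :
    ∀ M : ℕ, 1 ≤ M → ∀ u : ℂ,
      (ν : ℝ) + ε ≤ ‖u‖ → ‖u‖ ≤ (ν : ℝ) + 1 - ε →
      (∀ k : ℕ, k ≤ N → k ≠ ν →
        (N.choose k : ℝ) * ((‖u‖) ^ k / k.factorial) ^ M /
            ((N.choose ν : ℝ) * ((‖u‖) ^ ν / ν.factorial) ^ M)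
          ≤ (((N - ν).factorial * ν.factorial : ℕ) : ℝ) /
              (((N - k).factorial * k.factorial : ℕ) : ℝ) * ((N : ℝ) / ((N : ℝ) + ε)) ^ M) ∧
      ‖Qpoly N M u / ((N.choose ν : ℂ) * (-1) ^ ν * (u ^ ν / (ν.factorial : ℂ)) ^ M) - 1‖
        ≤ ∑ k ∈ (Finset.range (N + 1)).erase ν,
            (((N - ν).factorial * ν.factorial : ℕ) : ℝ) /
              (((N - k).factorial * k.factorial : ℕ) : ℝ) * ((N : ℝ) / ((N : ℝ) + ε)) ^ M :=
  Qpoly_estimate_annulus_general N ν ε hε hνN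
end
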